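/- arXiv:1808.05255 — 7 statements merged into one kernel-verified Lean document; each statement's English description precedes it below -/
import Mathlib

section
/- (Gambler's ruin conditional expected hitting time) For 0 < q < 1/2 and a positive integer L, let τ_L(ω) = inf{N : B_N(ω) - G_N(ω) = L} (with τ_L = ∞ if no such N exists). Then the conditional expectation of τ_L given the event {τ_L < ∞} under μ_q equals L/(1-2q); equivalently, (∫_{τ_L < ∞} τ_L dμ_q) / μ_q({τ_L < ∞}) = L/(1-2q). -/
open MeasureTheory Finset

/-- Number of `true`s (steps `+1`) among the first `N` coordinates of `ω`. -/
def Bcount (ω : ℕ → Bool) (N : ℕ) : ℕ := ((range N).filter fun i => ω i = true).card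

/-- Number of `false`s (steps `-1`) among the first `N` coordinates of `ω`. -/
def Gcount (ω : ℕ → Bool) (N : ℕ) : ℕ := ((range N).filter fun i => ω i = false).card

/-- The hitting time `τ_L(ω) = inf {N | B_N(ω) - G_N(ω) = L}` (equal to `0 = sInf ∅`
off the event `{τ_L < ∞}`, where its value is irrelevant). -/
noncomputable def tau (L : ℕ) (ω : ℕ → Bool) : ℕ :=
  sInf {N | (Bcount ω N : ℤ) - (Gcount ω N : ℤ) = L}

/-!
Flipping every coordinate maps `μ_q` to `μ_{1-q}`. A cylinder event of length `n` on which
`B_n - G_n = L` has `μ_q`-mass exactly `(q / (1 - q))^L` times its `μ_{1-q}`-mass, so on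
`{τ_L < ∞}` the law of `τ_L` under `μ_q` is a constant multiple of its law under `μ_{1-q}`;
the constant cancels in the conditional expectation.

Under `μ_{1-q}` the walk has drift `1 - 2q > 0`. For the stopped walk, one-step independence gives
`E[S_{τ ∧ n}] = (1 - 2q) ∑_{i<n} P(τ > i)`, while `S_{τ ∧ n} ≤ L`; hence `∑ P(τ > i) < ∞`, so
`τ_L` is a.s. finite and integrable, and dominated convergence turns `E[S_{τ ∧ n}] → L` into
`E[τ_L] = L / (1 - 2q)`.
-/

open Filter
open scoped ENNReal Topology

namespace GamblersRuin

variable {L n : ℕ} {ω : ℕ → Bool} {E : Set (ℕ → Bool)} {ν ν' : Measure (ℕ → Bool)}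
  {c : Bool → ℝ≥0∞}

def step (ω : ℕ → Bool) (i : ℕ) : ℤ := if ω i then 1 else -1

def walk (ω : ℕ → Bool) (n : ℕ) : ℤ := (Bcount ω n : ℤ) - (Gcount ω n : ℤ)

@[simp] lemma walk_zero (ω : ℕ → Bool) : walk ω 0 = 0 := by simp [walk, Bcount, Gcount]

lemma walk_succ (ω : ℕ → Bool) (n : ℕ) : walk ω (n + 1) = walk ω n + step ω n := by
  cases h : ω n <;>
    simp [walk, step, Bcount, Gcount, range_add_one, filter_insert, h] <;> ring

lemma walk_eq_sum (ω : ℕ → Bool) (n : ℕ) : walk ω n = ∑ i ∈ range n, step ω i := by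
  induction n with
  | zero => simp
  | succ n ih => rw [walk_succ, ih, sum_range_succ]

lemma abs_step (ω : ℕ → Bool) (i : ℕ) : |step ω i| = 1 := by
  unfold step; split <;> simp

lemma abs_walk_le (ω : ℕ → Bool) (n : ℕ) : |walk ω n| ≤ n := by
  rw [walk_eq_sum]
  refine (abs_sum_le_sum_abs _ _).trans ?_
  simp [abs_step]

lemma walk_congr {ω ω' : ℕ → Bool} {n : ℕ} (h : ∀ i < n, ω i = ω' i) :
    walk ω n = walk ω' n := by
  simp only [walk_eq_sum, step]
  exact sum_congr rfl fun i hi => by rw [h i (mem_range.1 hi)]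

def hitSet (L : ℕ) : Set (ℕ → Bool) := {ω | ∃ N, walk ω N = L}

def notHit (L i : ℕ) : Set (ℕ → Bool) := {ω | ∀ m ≤ i, walk ω m ≠ L}

lemma tau_zero (ω : ℕ → Bool) : tau 0 ω = 0 :=
  Nat.sInf_eq_zero.2 (Or.inl (walk_zero ω))

lemma walk_tau (h : ω ∈ hitSet L) : walk ω (tau L ω) = L := Nat.sInf_mem h

lemma tau_le_of_walk_eq (h : walk ω n = L) : tau L ω ≤ n := Nat.sInf_le h

lemma notHit_antitone : Antitone (notHit L) :=
  fun _ _ hij _ hω m hm => hω m (hm.trans hij)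

lemma lt_tau_iff (h : ω ∈ hitSet L) : n < tau L ω ↔ ω ∈ notHit L n :=
  ⟨fun hn _ hm hwalk => (tau_le_of_walk_eq hwalk).not_gt (hm.trans_lt hn),
    fun hω => not_le.1 fun hle => hω _ hle (walk_tau h)⟩

lemma tau_eq_zero_of_notMem (h : ω ∉ hitSet L) : tau L ω = 0 :=
  Nat.sInf_eq_zero.2 (Or.inr (Set.eq_empty_of_forall_notMem fun N hN => h ⟨N, hN⟩))

lemma tau_eq_iff (hn : 0 < n) : tau L ω = n ↔ walk ω n = L ∧ ∀ m < n, walk ω m ≠ L := by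
  constructor
  · rintro rfl
    have h : ω ∈ hitSet L := not_not.1 fun h => hn.ne' (tau_eq_zero_of_notMem h)
    exact ⟨walk_tau h, fun m hm hwalk => (tau_le_of_walk_eq hwalk).not_gt hm⟩
  · rintro ⟨hwalk, hbefore⟩
    refine (tau_le_of_walk_eq hwalk).antisymm (not_lt.1 fun hlt => ?_)
    exact hbefore _ hlt (walk_tau ⟨n, hwalk⟩)

lemma tau_eq_zero_iff (hL : 0 < L) : tau L ω = 0 ↔ ω ∉ hitSet L := by
  refine ⟨fun h0 h => ?_, fun h => ?_⟩
  · have := walk_tau h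
    rw [h0, walk_zero] at this
    omega
  · exact tau_eq_zero_of_notMem h

lemma hitSet_eq_iUnion_tau_eq (hL : 0 < L) : hitSet L = ⋃ n : ℕ, {ω | tau L ω = n + 1} := by
  ext ω
  simp only [Set.mem_iUnion]
  refine ⟨fun h => ⟨tau L ω - 1, ?_⟩, fun ⟨k, hk⟩ => ⟨k + 1, ((tau_eq_iff k.succ_pos).1 hk).1⟩⟩
  have := (tau_eq_zero_iff hL).not.2 (not_not.2 h)
  change tau L ω = tau L ω - 1 + 1
  omega

lemma walk_lt_of_mem_notHit (h : ω ∈ notHit L n) : walk ω n < L := by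
  induction n with
  | zero =>
    have := h 0 le_rfl
    rw [walk_zero] at this ⊢
    omega
  | succ n ih =>
    have hprev := ih (notHit_antitone n.le_succ h)
    have hstep : step ω n ≤ 1 := by unfold step; split <;> omega
    have hne := h (n + 1) le_rfl
    rw [walk_succ] at hne ⊢
    omega

-- The walk stopped at `τ_L`, written as a sum of increments `1_{τ_L > i} X_i` so that its mean
-- follows from one-step independence.
noncomputable def stoppedWalk (L n : ℕ) (ω : ℕ → Bool) : ℝ :=
  ∑ i ∈ range n, (notHit L i).indicator (fun ω => (step ω i : ℝ)) ω

lemma stoppedWalk_eq_walk (h : ω ∈ notHit L n) : stoppedWalk L n ω = walk ω n := by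
  rw [stoppedWalk, walk_eq_sum, Int.cast_sum]
  exact sum_congr rfl fun i hi =>
    Set.indicator_of_mem (notHit_antitone (mem_range.1 hi).le h) _

lemma stoppedWalk_le (n : ℕ) (ω : ℕ → Bool) : stoppedWalk L n ω ≤ L := by
  induction n with
  | zero => simp [stoppedWalk]
  | succ n ih =>
    rw [stoppedWalk, sum_range_succ, ← stoppedWalk]
    by_cases h : ω ∈ notHit L n
    · have hstep : step ω n ≤ 1 := by unfold step; split <;> omega
      have hlt := walk_lt_of_mem_notHit h
      rw [Set.indicator_of_mem h, stoppedWalk_eq_walk h]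
      exact_mod_cast (by omega : walk ω n + step ω n ≤ L)
    · rwa [Set.indicator_of_notMem h, add_zero]

lemma stoppedWalk_eq_walk_min (h : ω ∈ hitSet L) (n : ℕ) :
    stoppedWalk L n ω = walk ω (min n (tau L ω)) := by
  have hfilter : (range n).filter (· < tau L ω) = range (min n (tau L ω)) := by
    ext i; simp
  simp_rw [stoppedWalk, Set.indicator, ← lt_tau_iff h, ← sum_filter, hfilter, walk_eq_sum,
    Int.cast_sum]

lemma abs_stoppedWalk_le_tau (h : ω ∈ hitSet L) (n : ℕ) : |stoppedWalk L n ω| ≤ tau L ω := by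
  rw [stoppedWalk_eq_walk_min h]
  exact_mod_cast (abs_walk_le ω _).trans (by exact_mod_cast min_le_right n (tau L ω))

lemma stoppedWalk_of_tau_le (h : ω ∈ hitSet L) (hn : tau L ω ≤ n) : stoppedWalk L n ω = L := by
  rw [stoppedWalk_eq_walk_min h, min_eq_right hn, walk_tau h]
  rfl

def DeterminedBy (n : ℕ) (E : Set (ℕ → Bool)) : Prop :=
  ∀ ω ω', (∀ i < n, ω i = ω' i) → (ω ∈ E ↔ ω' ∈ E)

def prefixWord (n : ℕ) (ω : ℕ → Bool) : Fin n → Bool := fun i => ω i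

def IsBernoulliProduct (ν : Measure (ℕ → Bool)) (c : Bool → ℝ≥0∞) : Prop :=
  ∀ (s : Finset ℕ) (f : ℕ → Bool), ν {ω | ∀ i ∈ s, ω i = f i} = ∏ i ∈ s, c (f i)

lemma measurable_prefixWord (n : ℕ) : Measurable (prefixWord n) :=
  measurable_pi_lambda _ fun _ => measurable_pi_apply _

lemma DeterminedBy.eq_preimage (hE : DeterminedBy n E) :
    E = prefixWord n ⁻¹' (prefixWord n '' E) := by
  refine (Set.subset_preimage_image _ _).antisymm fun ω ⟨ω', hω', hprefix⟩ => ?_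
  exact (hE ω' ω fun i hi => congrFun hprefix ⟨i, hi⟩).1 hω'

lemma DeterminedBy.measurableSet (hE : DeterminedBy n E) : MeasurableSet E := by
  rw [hE.eq_preimage]
  exact measurable_prefixWord n MeasurableSet.of_discrete

lemma measure_inter_eq_sum_prefixWord (hE : DeterminedBy n E) (B : Set (ℕ → Bool)) :
    ν (E ∩ B) = ∑ w ∈ (Set.toFinite (prefixWord n '' E)).toFinset,
      ν (prefixWord n ⁻¹' {w} ∩ B) := by
  have hmeas : ∀ S : Set (Fin n → Bool), MeasurableSet (prefixWord n ⁻¹' S) :=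
    fun _ => measurable_prefixWord n MeasurableSet.of_discrete
  conv_lhs => rw [hE.eq_preimage, ← (Set.toFinite (prefixWord n '' E)).coe_toFinset,
    ← Measure.restrict_apply (hmeas _), ← sum_measure_preimage_singleton _ fun w _ => hmeas {w}]
  exact sum_congr rfl fun w _ => Measure.restrict_apply (hmeas {w})

lemma measure_eq_sum_prefixWord (hE : DeterminedBy n E) :
    ν E = ∑ w ∈ (Set.toFinite (prefixWord n '' E)).toFinset, ν (prefixWord n ⁻¹' {w}) := by
  simpa using measure_inter_eq_sum_prefixWord (ν := ν) hE Set.univ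

lemma preimage_prefixWord_singleton (n : ℕ) (ω : ℕ → Bool) :
    prefixWord n ⁻¹' {prefixWord n ω} = {ω' | ∀ i ∈ range n, ω' i = ω i} := by
  ext ω'
  simp [prefixWord, funext_iff, Fin.forall_iff]

lemma IsBernoulliProduct.measure_cylinder (hν : IsBernoulliProduct ν c) (n : ℕ) (ω : ℕ → Bool) :
    ν (prefixWord n ⁻¹' {prefixWord n ω}) = ∏ i ∈ range n, c (ω i) := by
  rw [preimage_prefixWord_singleton, hν]

lemma IsBernoulliProduct.measure_cylinder_inter_coord (hν : IsBernoulliProduct ν c) (n : ℕ)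
    (ω : ℕ → Bool) (b : Bool) :
    ν (prefixWord n ⁻¹' {prefixWord n ω} ∩ {ω' | ω' n = b}) = c b * ∏ i ∈ range n, c (ω i) := by
  have hset : prefixWord n ⁻¹' {prefixWord n ω} ∩ {ω' | ω' n = b}
      = {ω' | ∀ i ∈ insert n (range n), ω' i = Function.update ω n b i} := by
    ext ω'
    simp +contextual [preimage_prefixWord_singleton, Function.update_apply, and_comm, ne_of_lt]
  rw [hset, hν, prod_insert notMem_range_self, Function.update_self]
  congr 1
  exact prod_congr rfl fun i hi => by rw [Function.update_of_ne (mem_range.1 hi).ne]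

lemma IsBernoulliProduct.measure_inter_coord (hν : IsBernoulliProduct ν c)
    (hE : DeterminedBy n E) (b : Bool) : ν (E ∩ {ω | ω n = b}) = c b * ν E := by
  rw [measure_inter_eq_sum_prefixWord hE, measure_eq_sum_prefixWord hE, mul_sum]
  refine sum_congr rfl fun w hw => ?_
  obtain ⟨ω, -, rfl⟩ := (Set.Finite.mem_toFinset _).1 hw
  rw [hν.measure_cylinder_inter_coord, hν.measure_cylinder]

lemma prod_range_eq_pow_Bcount_mul_pow_Gcount {M : Type*} [CommMonoid M] (c : Bool → M)
    (ω : ℕ → Bool) (n : ℕ) :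
    ∏ i ∈ range n, c (ω i) = c true ^ Bcount ω n * c false ^ Gcount ω n := by
  rw [← prod_filter_mul_prod_filter_not (range n) (fun i => ω i = true)]
  simp only [Bool.not_eq_true]
  rw [prod_congr rfl fun i hi => by rw [(mem_filter.1 hi).2], prod_const,
    prod_congr rfl fun i hi => by rw [(mem_filter.1 hi).2], prod_const, Bcount, Gcount]

def flipSteps (ω : ℕ → Bool) : ℕ → Bool := fun i => !ω i

lemma measurable_flipSteps : Measurable flipSteps := by
  unfold flipSteps
  fun_prop

lemma IsBernoulliProduct.map_flipSteps (hν : IsBernoulliProduct ν c) :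
    IsBernoulliProduct (ν.map flipSteps) (fun x => c (!x)) := by
  intro s f
  rw [Measure.map_apply measurable_flipSteps (by measurability)]
  simp only [flipSteps, Set.preimage_ofPred_eq, Bool.not_eq_eq_eq_not]
  exact hν s _

lemma IsBernoulliProduct.tilt (hν : IsBernoulliProduct ν c)
    (hν' : IsBernoulliProduct ν' (fun x => c (!x))) (hE : DeterminedBy n E) (hwalk : ∀ ω ∈ E, walk ω n = L) :
    c false ^ L * ν E = c true ^ L * ν' E := by
  rw [measure_eq_sum_prefixWord hE, measure_eq_sum_prefixWord hE, mul_sum, mul_sum]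
  refine sum_congr rfl fun w hw => ?_
  obtain ⟨ω, hω, rfl⟩ := (Set.Finite.mem_toFinset _).1 hw
  have hcount : Bcount ω n = Gcount ω n + L := by
    have := hwalk ω hω
    rw [walk] at this
    omega
  rw [hν.measure_cylinder, hν'.measure_cylinder, prod_range_eq_pow_Bcount_mul_pow_Gcount c,
    prod_range_eq_pow_Bcount_mul_pow_Gcount (fun x => c (!x)), hcount, Bool.not_true,
    Bool.not_false]
  ring

lemma determinedBy_notHit (L i : ℕ) : DeterminedBy i (notHit L i) := fun ω ω' h =>
  forall₂_congr fun m hm => by rw [walk_congr fun j hj => h j (hj.trans_le hm)]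

lemma determinedBy_tau_eq (hn : 0 < n) : DeterminedBy n {ω | tau L ω = n} := fun ω ω' h => by
  change tau L ω = n ↔ tau L ω' = n
  rw [tau_eq_iff hn, tau_eq_iff hn, walk_congr h]
  exact and_congr_right' <| forall₂_congr fun m hm => by
    rw [walk_congr fun j hj => h j (hj.trans hm)]

lemma measurableSet_hitSet (L : ℕ) : MeasurableSet (hitSet L) := by
  rw [hitSet, Set.ofPred_exists]
  exact .iUnion fun N => DeterminedBy.measurableSet (n := N) fun ω ω' h => by
    change walk ω N = L ↔ walk ω' N = L
    rw [walk_congr h]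

lemma measurable_tau (hL : 0 < L) : Measurable (tau L) := by
  refine measurable_to_countable' fun k => ?_
  rcases k with _ | k
  · have : tau L ⁻¹' {0} = (hitSet L)ᶜ := Set.ext fun ω => tau_eq_zero_iff hL
    exact this ▸ (measurableSet_hitSet L).compl
  · exact (determinedBy_tau_eq k.succ_pos).measurableSet

lemma setLIntegral_hitSet_eq_tsum (hL : 0 < L) (f : ℕ → ℝ≥0∞) :
    ∫⁻ ω in hitSet L, f (tau L ω) ∂ν = ∑' k, f (k + 1) * ν {ω | tau L ω = k + 1} := by
  have hmeas (k : ℕ) : MeasurableSet {ω | tau L ω = k + 1} :=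
    (determinedBy_tau_eq k.succ_pos).measurableSet
  have hdisj : Pairwise (Function.onFun Disjoint fun k : ℕ => {ω | tau L ω = k + 1}) :=
    fun k l hkl => Set.disjoint_left.2 fun ω hk hl => hkl (Nat.succ_injective (hk.symm.trans hl))
  rw [hitSet_eq_iUnion_tau_eq hL, lintegral_iUnion hmeas hdisj]
  refine tsum_congr fun k => ?_
  rw [setLIntegral_congr_fun (hmeas k) fun ω (hω : tau L ω = k + 1) => by rw [hω],
    setLIntegral_const]

lemma IsBernoulliProduct.setLIntegral_hitSet_tilt (hν : IsBernoulliProduct ν c)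
    (hν' : IsBernoulliProduct ν' (fun x => c (!x))) (hL : 0 < L) (f : ℕ → ℝ≥0∞) :
    c false ^ L * ∫⁻ ω in hitSet L, f (tau L ω) ∂ν
      = c true ^ L * ∫⁻ ω in hitSet L, f (tau L ω) ∂ν' := by
  simp_rw [setLIntegral_hitSet_eq_tsum hL, ← ENNReal.tsum_mul_left, mul_left_comm _ (f _)]
  exact tsum_congr fun k => by
    rw [hν.tilt hν' (determinedBy_tau_eq k.succ_pos) fun ω hω => ((tau_eq_iff k.succ_pos).1 hω).1]

lemma measurable_step (i : ℕ) : Measurable fun ω : ℕ → Bool => (step ω i : ℝ) :=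
  (Measurable.of_discrete (f := fun b : Bool => ((if b then 1 else -1 : ℤ) : ℝ))).comp
    (measurable_pi_apply i)

lemma integrable_indicator_step [IsFiniteMeasure ν] (L i : ℕ) :
    Integrable ((notHit L i).indicator fun ω => (step ω i : ℝ)) ν := by
  refine Integrable.indicator ?_ (determinedBy_notHit L i).measurableSet
  refine .of_bound (measurable_step i).aestronglyMeasurable 1 (ae_of_all _ fun ω => ?_)
  rw [Real.norm_eq_abs, ← Int.cast_abs, abs_step, Int.cast_one]

lemma integrable_stoppedWalk [IsFiniteMeasure ν] (L n : ℕ) : Integrable (stoppedWalk L n) ν :=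
  integrable_finsetSum _ fun i _ => integrable_indicator_step L i

lemma IsBernoulliProduct.integral_indicator_step [IsFiniteMeasure ν] (hν : IsBernoulliProduct ν c)
    {E : Set (ℕ → Bool)} {i : ℕ} (hE : DeterminedBy i E) :
    ∫ ω, E.indicator (fun ω => (step ω i : ℝ)) ω ∂ν
      = ((c true).toReal - (c false).toReal) * ν.real E := by
  have hcoord (b : Bool) : MeasurableSet (E ∩ {ω | ω i = b}) :=
    hE.measurableSet.inter ((measurableSet_singleton b).preimage (measurable_pi_apply i))
  have hsplit : E.indicator (fun ω => (step ω i : ℝ))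
      = (E ∩ {ω | ω i = true}).indicator 1 - (E ∩ {ω | ω i = false}).indicator 1 := by
    ext ω
    by_cases hω : ω ∈ E <;> cases h : ω i <;> simp [step, hω, h]
  rw [hsplit, integral_sub' ((integrable_const 1).indicator (hcoord true))
      ((integrable_const 1).indicator (hcoord false)),
    integral_indicator_one (hcoord true), integral_indicator_one (hcoord false),
    measureReal_def, measureReal_def, hν.measure_inter_coord hE, hν.measure_inter_coord hE,
    ENNReal.toReal_mul, ENNReal.toReal_mul, measureReal_def]
  ring

lemma IsBernoulliProduct.integral_stoppedWalk [IsFiniteMeasure ν] (hν : IsBernoulliProduct ν c)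
    (L n : ℕ) : ∫ ω, stoppedWalk L n ω ∂ν
      = ((c true).toReal - (c false).toReal) * ∑ i ∈ range n, ν.real (notHit L i) := by
  unfold stoppedWalk
  rw [integral_finsetSum _ fun i _ => integrable_indicator_step L i, mul_sum]
  exact sum_congr rfl fun i _ => hν.integral_indicator_step (determinedBy_notHit L i)

lemma IsBernoulliProduct.summable_measureReal_notHit [IsProbabilityMeasure ν]
    (hν : IsBernoulliProduct ν c) (L : ℕ) (hdrift : (c false).toReal < (c true).toReal) :
    Summable fun i => ν.real (notHit L i) := by
  refine summable_of_sum_range_le (c := L / ((c true).toReal - (c false).toReal))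
    (fun _ => measureReal_nonneg) fun n => ?_
  rw [le_div_iff₀' (sub_pos.2 hdrift), ← hν.integral_stoppedWalk]
  calc ∫ ω, stoppedWalk L n ω ∂ν ≤ ∫ _, (L : ℝ) ∂ν :=
        integral_mono (integrable_stoppedWalk L n) (integrable_const _) (stoppedWalk_le n)
    _ = L := by simp

lemma ae_mem_hitSet_of_summable [IsFiniteMeasure ν]
    (hsum : Summable fun i => ν.real (notHit L i)) : ∀ᵐ ω ∂ν, ω ∈ hitSet L := by
  have hsub (i : ℕ) : {ω | ω ∉ hitSet L} ⊆ notHit L i := fun ω hω m _ hm => hω ⟨m, hm⟩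
  rw [ae_iff, ← measureReal_eq_zero_iff]
  exact le_antisymm (ge_of_tendsto' hsum.tendsto_atTop_zero fun i => measureReal_mono (hsub i))
    measureReal_nonneg

lemma tau_eq_tsum_indicator {ω : ℕ → Bool} (h : ω ∈ hitSet L) :
    (tau L ω : ℝ≥0∞) = ∑' i, (notHit L i).indicator 1 ω := by
  have hterm (i : ℕ) : (notHit L i).indicator 1 ω = if i < tau L ω then (1 : ℝ≥0∞) else 0 := by
    by_cases hi : i < tau L ω
    · simp [hi, (lt_tau_iff h).1 hi]
    · simp [hi, mt (lt_tau_iff h).2 hi]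
  rw [tsum_congr hterm, tsum_eq_sum (s := range (tau L ω)) fun i hi => if_neg (by simpa using hi),
    sum_ite_of_true fun i hi => mem_range.1 hi]
  simp

lemma lintegral_tau_eq_tsum (hae : ∀ᵐ ω ∂ν, ω ∈ hitSet L) :
    ∫⁻ ω, (tau L ω : ℝ≥0∞) ∂ν = ∑' i, ν (notHit L i) := by
  have hmeas (i : ℕ) : MeasurableSet (notHit L i) := (determinedBy_notHit L i).measurableSet
  rw [lintegral_congr_ae (hae.mono fun ω => tau_eq_tsum_indicator),
    lintegral_tsum fun i => (measurable_one.indicator (hmeas i)).aemeasurable]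
  exact tsum_congr fun i => lintegral_indicator_one (hmeas i)

lemma tendsto_integral_stoppedWalk [IsProbabilityMeasure ν] (hae : ∀ᵐ ω ∂ν, ω ∈ hitSet L)
    (htau : Integrable (fun ω => (tau L ω : ℝ)) ν) :
    Tendsto (fun n => ∫ ω, stoppedWalk L n ω ∂ν) atTop (𝓝 L) := by
  simpa using tendsto_integral_of_dominated_convergence _
    (fun n => (integrable_stoppedWalk L n).aestronglyMeasurable) htau
    (fun n => hae.mono fun ω h => (Real.norm_eq_abs _).trans_le (abs_stoppedWalk_le_tau h n))
    (hae.mono fun ω h => tendsto_atTop_of_eventually_const fun n => stoppedWalk_of_tau_le h)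

theorem IsBernoulliProduct.lintegral_tau [IsProbabilityMeasure ν] (hν : IsBernoulliProduct ν c)
    (hdrift : (c false).toReal < (c true).toReal) (hL : 0 < L) :
    ∫⁻ ω, (tau L ω : ℝ≥0∞) ∂ν = ENNReal.ofReal (L / ((c true).toReal - (c false).toReal)) := by
  have hsum := hν.summable_measureReal_notHit L hdrift
  have hae := ae_mem_hitSet_of_summable hsum
  have hlint : ∫⁻ ω, (tau L ω : ℝ≥0∞) ∂ν = ENNReal.ofReal (∑' i, ν.real (notHit L i)) := by
    rw [lintegral_tau_eq_tsum hae, ENNReal.ofReal_tsum_of_nonneg (fun _ => measureReal_nonneg) hsum]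
    simp_rw [measureReal_def, ENNReal.ofReal_toReal (measure_ne_top _ _)]
  have htau : Integrable (fun ω => (tau L ω : ℝ)) ν := by
    simpa using integrable_toReal_of_lintegral_ne_top
      ((measurable_from_nat (f := fun k : ℕ => (k : ℝ≥0∞))).comp
        (measurable_tau hL)).aemeasurable (hlint ▸ ENNReal.ofReal_ne_top)
  have hlim : Tendsto (fun n => ∫ ω, stoppedWalk L n ω ∂ν) atTop
      (𝓝 (((c true).toReal - (c false).toReal) * ∑' i, ν.real (notHit L i))) := by
    simp_rw [hν.integral_stoppedWalk]
    exact hsum.hasSum.tendsto_sum_nat.const_mul _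
  rw [hlint, tendsto_nhds_unique (tendsto_integral_stoppedWalk hae htau) hlim,
    mul_div_cancel_left₀ _ (sub_pos.2 hdrift).ne']

lemma setIntegral_natCast_eq_toReal {s : Set (ℕ → Bool)} {f : (ℕ → Bool) → ℕ}
    (hf : Measurable f) : ∫ ω in s, (f ω : ℝ) ∂ν = (∫⁻ ω in s, (f ω : ℝ≥0∞) ∂ν).toReal := by
  simpa using integral_toReal (μ := ν.restrict s) (f := fun ω => (f ω : ℝ≥0∞))
    ((measurable_from_nat (f := fun k : ℕ => (k : ℝ≥0∞))).comp hf).aemeasurable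
    (ae_of_all _ fun _ => ENNReal.natCast_lt_top _)

theorem IsBernoulliProduct.setIntegral_tau_div_measureReal [IsProbabilityMeasure ν]
    (hν : IsBernoulliProduct ν c) (hdrift : (c true).toReal < (c false).toReal)
    (hpos : 0 < (c true).toReal) (hL : 0 < L) :
    (∫ ω in hitSet L, (tau L ω : ℝ) ∂ν) / ν.real (hitSet L)
      = L / ((c false).toReal - (c true).toReal) := by
  set ν' := ν.map flipSteps
  have : IsProbabilityMeasure ν' :=
    Measure.isProbabilityMeasure_map measurable_flipSteps.aemeasurable
  have hν' : IsBernoulliProduct ν' (fun x => c (!x)) := hν.map_flipSteps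
  have hfull : ν'.restrict (hitSet L) = ν' := Measure.restrict_eq_self_of_ae_mem
    (ae_mem_hitSet_of_summable (hν'.summable_measureReal_notHit L hdrift))
  have hmass := congrArg ENNReal.toReal (hν.setLIntegral_hitSet_tilt hν' hL fun _ => 1)
  have hmean := congrArg ENNReal.toReal (hν.setLIntegral_hitSet_tilt hν' hL Nat.cast)
  rw [hfull, hν'.lintegral_tau hdrift hL, Bool.not_true, Bool.not_false] at hmean
  simp only [hfull, lintegral_const, measure_univ, mul_one, one_mul, Measure.restrict_apply_univ,
    ENNReal.toReal_mul, ENNReal.toReal_pow, ← measureReal_def,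
    ENNReal.toReal_ofReal (div_nonneg L.cast_nonneg (sub_pos.2 hdrift).le)] at hmass hmean
  have hmass_ne : ν.real (hitSet L) ≠ 0 := fun h => by
    rw [h, mul_zero] at hmass
    exact pow_ne_zero L hpos.ne' hmass.symm
  rw [setIntegral_natCast_eq_toReal (measurable_tau hL), div_eq_iff hmass_ne]
  refine mul_left_cancel₀ (pow_ne_zero L (hpos.trans hdrift).ne') ?_
  linear_combination hmean - L / ((c false).toReal - (c true).toReal) * hmass

end GamblersRuin

theorem gamblers_ruin_expected_hitting_time_general (q : ℝ) (hq0 : 0 < q) (hq : q < 1 / 2)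
    (L : ℕ)
    (μ : Measure (ℕ → Bool)) [IsProbabilityMeasure μ]
    (hμ : ∀ (s : Finset ℕ) (f : ℕ → Bool),
      μ {ω | ∀ i ∈ s, ω i = f i}
        = ∏ i ∈ s, if f i then ENNReal.ofReal q else ENNReal.ofReal (1 - q)) :
    (∫ ω in {ω | ∃ N, (Bcount ω N : ℤ) - (Gcount ω N : ℤ) = L}, (tau L ω : ℝ) ∂μ)
        / (μ {ω | ∃ N, (Bcount ω N : ℤ) - (Gcount ω N : ℤ) = L}).toReal
      = L / (1 - 2 * q) := by
  rcases Nat.eq_zero_or_pos L with rfl | hL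
  · simp [GamblersRuin.tau_zero]
  have hμ : GamblersRuin.IsBernoulliProduct μ
      fun x => if x then ENNReal.ofReal q else ENNReal.ofReal (1 - q) := hμ
  have hweights : (ENNReal.ofReal q).toReal = q ∧ (ENNReal.ofReal (1 - q)).toReal = 1 - q :=
    ⟨ENNReal.toReal_ofReal hq0.le, ENNReal.toReal_ofReal (by linarith)⟩
  have key := hμ.setIntegral_tau_div_measureReal
    (by simp only [hweights, if_true, Bool.false_eq_true, if_false]; linarith)
    (by simpa [hweights]) hL
  simp only [hweights, if_true, Bool.false_eq_true, if_false] at key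
  rw [show (1 : ℝ) - 2 * q = 1 - q - q by ring]
  exact key

/-- **Gambler's ruin conditional expected hitting time.**  Let `μ` be the product
probability measure on `ℕ → Bool` whose coordinates are independent and equal `true`
with probability `q` (cylinder condition `hμ`).  For `0 < q < 1/2` and `L ≥ 1`, the
conditional expectation of `τ_L` given the event `{τ_L < ∞} = {ω | ∃ N, B_N - G_N = L}`
equals `L/(1-2q)`. -/
theorem gamblers_ruin_expected_hitting_time (q : ℝ) (hq0 : 0 < q) (hq : q < 1 / 2)
    (L : ℕ) (hL : 0 < L)
    (μ : Measure (ℕ → Bool)) [IsProbabilityMeasure μ]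
    (hμ : ∀ (s : Finset ℕ) (f : ℕ → Bool),
      μ {ω | ∀ i ∈ s, ω i = f i}
        = ∏ i ∈ s, if f i then ENNReal.ofReal q else ENNReal.ofReal (1 - q)) :
    (∫ ω in {ω | ∃ N, (Bcount ω N : ℤ) - (Gcount ω N : ℤ) = L}, (tau L ω : ℝ) ∂μ)
        / (μ {ω | ∃ N, (Bcount ω N : ℤ) - (Gcount ω N : ℤ) = L}).toReal
      = L / (1 - 2 * q) :=
  gamblers_ruin_expected_hitting_time_general q hq0 hq L μ hμ
end

section
/- For 0 < q < 1/2, a positive integer n, and m ∈ ℕ with m < n, the probability under μ_q of the joint event that exactly m trues occur before the n-th false (i.e. the n-th false occurs at position n+m) AND there exists N ≥ n+m with B_N(ω) = G_N(ω) (team B, being n-m behind at the end of Phase I, eventually ties the score) equals C(n+m-1, m) · (1-q)^m · q^n. -/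
open MeasureTheory Finset

/-!
Conditioning on the first coordinate turns the probability of an event that depends on finitely
many coordinates into an explicit recursion (`prefixProb`), which factorises over consecutive
blocks of coordinates. Phase I is a negative-binomial event on the first `n + m` goals; after it
team B trails by `n - m` and catches up iff the walk `B_j - G_j` of the later goals ever reaches
`n - m`. The probability of reaching level `d` within `k` steps obeys the gambler's-ruin
recursion; its limit `θ d` as `k → ∞` solves `θ (d+1) = q θ d + (1-q) θ (d+2)`, `θ 0 = 1`,
and is squeezed between `0` and `ρ ^ d` with `ρ = q / (1 - q) < 1`, which forces `θ d = ρ ^ d`.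
-/

open Filter Topology

namespace Catchup

section Sequences

def cons (x : Bool) (ω : ℕ → Bool) : ℕ → Bool
  | 0 => x
  | i + 1 => ω i

def shift (a : ℕ) (ω : ℕ → Bool) : ℕ → Bool := fun i => ω (a + i)

@[simp] lemma cons_zero (x : Bool) (ω : ℕ → Bool) : cons x ω 0 = x := rfl

@[simp] lemma cons_succ (x : Bool) (ω : ℕ → Bool) (i : ℕ) : cons x ω (i + 1) = ω i := rfl

@[simp] lemma shift_zero (ω : ℕ → Bool) : shift 0 ω = ω := by
  funext i; simp [shift]

@[simp] lemma shift_succ_cons (a : ℕ) (x : Bool) (ω : ℕ → Bool) :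
    shift (a + 1) (cons x ω) = shift a ω := by
  funext i
  simp only [shift, Nat.add_right_comm a 1 i, cons_succ]

lemma shift_eq_cons (a : ℕ) (ω : ℕ → Bool) : shift a ω = cons (ω a) (shift (a + 1) ω) := by
  funext i
  cases i with
  | zero => rfl
  | succ i => simp only [shift, cons_succ, Nat.add_right_comm a 1 i, Nat.add_assoc]

lemma dependsOn_comp_cons {L : ℕ} {P : (ℕ → Bool) → Prop} (hP : DependsOn P (Set.Iio (L + 1)))
    (x : Bool) : DependsOn (fun ω => P (cons x ω)) (Set.Iio L) := by
  intro ω ω' h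
  refine hP fun i hi => ?_
  cases i with
  | zero => rfl
  | succ i => exact h i (by simpa using hi)

lemma dependsOn_and_shift {P₁ P₂ : (ℕ → Bool) → Prop} {a k : ℕ}
    (h₁ : DependsOn P₁ (Set.Iio a)) (h₂ : DependsOn P₂ (Set.Iio k)) :
    DependsOn (fun ω => P₁ ω ∧ P₂ (shift a ω)) (Set.Iio (a + k)) := by
  intro ω ω' h
  simp only [Set.mem_Iio] at h
  dsimp only
  rw [h₁ fun i hi => h i (by simp at hi; omega),
    h₂ (x := shift a ω) (y := shift a ω') fun i hi => h (a + i) (by simp at hi; omega)]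

end Sequences

section Counts

variable (ω : ℕ → Bool)

lemma Bcount_add_Gcount (N : ℕ) : Bcount ω N + Gcount ω N = N := by
  rw [Bcount, Gcount, card_filter, card_filter, ← sum_add_distrib]
  conv_rhs => rw [← card_range N, card_eq_sum_ones]
  exact sum_congr rfl fun i _ => by cases ω i <;> rfl

lemma Gcount_succ (N : ℕ) : Gcount ω (N + 1) = Gcount ω N + if ω N = false then 1 else 0 := by
  rw [Gcount, Gcount, card_filter, card_filter, sum_range_succ]

lemma Gcount_cons_succ (x : Bool) (N : ℕ) :
    Gcount (cons x ω) (N + 1) = Gcount ω N + if x = false then 1 else 0 := by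
  rw [Gcount, Gcount, card_filter, card_filter, sum_range_succ']
  rfl

lemma dependsOn_Gcount (N : ℕ) : DependsOn (fun ω => Gcount ω N) (Set.Iio N) := by
  intro ω ω' h
  simp only [Gcount]
  congr 1
  exact filter_congr fun i hi => by rw [h i (by simpa using hi)]

def lead (j : ℕ) : ℤ := Bcount ω j - Gcount ω j

lemma lead_eq_sum (j : ℕ) : lead ω j = ∑ i ∈ range j, if ω i then 1 else -1 := by
  rw [lead, Bcount, Gcount, natCast_card_filter, natCast_card_filter, ← sum_sub_distrib]
  exact sum_congr rfl fun i _ => by cases ω i <;> simp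

@[simp] lemma lead_zero : lead ω 0 = 0 := by simp [lead_eq_sum]

lemma lead_add (a j : ℕ) : lead ω (a + j) = lead ω a + lead (shift a ω) j := by
  simp only [lead_eq_sum, sum_range_add]
  rfl

lemma lead_cons_succ (x : Bool) (j : ℕ) :
    lead (cons x ω) (j + 1) = (if x then 1 else -1) + lead ω j := by
  rw [lead_eq_sum, lead_eq_sum, sum_range_succ', add_comm]
  rfl

lemma dependsOn_lead (j : ℕ) : DependsOn (fun ω => lead ω j) (Set.Iio j) := by
  intro ω ω' h
  simp only [lead_eq_sum]
  exact sum_congr rfl fun i hi => by rw [h i (by simpa using hi)]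

lemma exists_Bcount_eq_Gcount_iff {a d : ℕ} (h : Bcount ω a + d = Gcount ω a) :
    (∃ N, a ≤ N ∧ Bcount ω N = Gcount ω N) ↔ ∃ j, lead (shift a ω) j = d := by
  have key : ∀ j, Bcount ω (a + j) = Gcount ω (a + j) ↔ lead (shift a ω) j = d := by
    intro j
    have := lead_add ω a j
    simp only [lead] at this ⊢
    omega
  constructor
  · rintro ⟨N, hN, hBG⟩
    obtain ⟨j, rfl⟩ := Nat.exists_eq_add_of_le hN
    exact ⟨j, (key j).1 hBG⟩
  · rintro ⟨j, hj⟩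
    exact ⟨a + j, Nat.le_add_right a j, (key j).2 hj⟩

def HitsWithin (k d : ℕ) : Prop := ∃ j ≤ k, lead ω j = d

lemma hitsWithin_zero_right (k : ℕ) : HitsWithin ω k 0 := ⟨0, Nat.zero_le k, rfl⟩

lemma hitsWithin_zero_left (d : ℕ) : HitsWithin ω 0 d ↔ d = 0 := by
  constructor
  · rintro ⟨j, hj, hd⟩
    obtain rfl : j = 0 := Nat.le_zero.mp hj
    simpa using hd.symm
  · rintro rfl
    exact hitsWithin_zero_right ω 0

lemma hitsWithin_cons_succ_succ (x : Bool) (k d : ℕ) :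
    HitsWithin (cons x ω) (k + 1) (d + 1) ↔ HitsWithin ω k (if x then d else d + 2) := by
  constructor
  · rintro ⟨_ | j, hj, hd⟩
    · simp at hd; omega
    · rw [lead_cons_succ] at hd
      exact ⟨j, by omega, by cases x <;> simp at hd ⊢ <;> omega⟩
  · rintro ⟨j, hj, hd⟩
    exact ⟨j + 1, by omega, by rw [lead_cons_succ]; cases x <;> simp at hd ⊢ <;> omega⟩

lemma dependsOn_hitsWithin (k d : ℕ) : DependsOn (fun ω => HitsWithin ω k d) (Set.Iio k) := by
  intro ω ω' h
  refine propext (exists_congr fun j => and_congr_right fun hj => ?_)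
  rw [show lead ω j = lead ω' j from dependsOn_lead j fun i hi => h i (lt_of_lt_of_le hi hj)]

end Counts

section PrefixProb

variable (q : ℝ)

/-- For `P` depending only on the first `L` coordinates, this is its probability when each
coordinate is `true` with probability `q`, computed by conditioning on the first coordinate. -/
noncomputable def prefixProb : ℕ → ((ℕ → Bool) → Prop) → ℝ
  | 0, P => open Classical in if P fun _ => false then 1 else 0
  | L + 1, P => q * prefixProb L (fun ω => P (cons true ω))
      + (1 - q) * prefixProb L (fun ω => P (cons false ω))

variable {q}

lemma prefixProb_nonneg (hq0 : 0 ≤ q) (hq1 : q ≤ 1) (L : ℕ) (P : (ℕ → Bool) → Prop) :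
    0 ≤ prefixProb q L P := by
  induction L generalizing P with
  | zero => unfold prefixProb; split_ifs <;> norm_num
  | succ L ih =>
    exact add_nonneg (mul_nonneg hq0 (ih _)) (mul_nonneg (sub_nonneg.2 hq1) (ih _))

open Classical in
lemma prefixProb_const (L : ℕ) (c : Prop) : prefixProb q L (fun _ => c) = if c then 1 else 0 := by
  induction L with
  | zero => rfl
  | succ L ih => rw [prefixProb, ih]; split_ifs <;> ring

lemma prefixProb_and_shift (k : ℕ) (P₂ : (ℕ → Bool) → Prop) (a : ℕ) {P₁ : (ℕ → Bool) → Prop}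
    (h₁ : DependsOn P₁ (Set.Iio a)) :
    prefixProb q (a + k) (fun ω => P₁ ω ∧ P₂ (shift a ω))
      = prefixProb q a P₁ * prefixProb q k P₂ := by
  induction a generalizing P₁ with
  | zero =>
    obtain ⟨c, rfl⟩ : ∃ c, P₁ = fun _ => c :=
      ⟨_, funext fun ω => h₁ (x := ω) (y := fun _ => false) (by simp)⟩
    by_cases hc : c <;> simp [hc, prefixProb_const]
  | succ a ih =>
    rw [Nat.add_right_comm]
    simp only [prefixProb, shift_succ_cons]
    rw [ih (dependsOn_comp_cons h₁ true), ih (dependsOn_comp_cons h₁ false)]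
    ring

lemma prefixProb_Gcount_eq (L j : ℕ) :
    prefixProb q L (fun ω => Gcount ω L = j) = L.choose j * (1 - q) ^ j * q ^ (L - j) := by
  induction L generalizing j with
  | zero => cases j <;> simp [prefixProb, Gcount]
  | succ L ih =>
    simp only [prefixProb, Gcount_cons_succ, Bool.true_eq_false, if_false, if_true, add_zero]
    cases j with
    | zero =>
      simp only [ih, Nat.add_eq_zero_iff, one_ne_zero, and_false, prefixProb_const]
      simp [pow_succ, mul_comm]
    | succ j =>
      simp only [Nat.add_right_cancel_iff, ih, Nat.choose_succ_succ, Nat.cast_add]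
      rcases Nat.lt_or_ge j L with hj | hj
      · rw [Nat.add_sub_add_right, show L - j = L - (j + 1) + 1 by omega]
        ring
      · rw [Nat.choose_eq_zero_of_lt (by omega : L < j + 1), Nat.sub_eq_zero_of_le hj,
          Nat.sub_eq_zero_of_le (by omega : L + 1 ≤ j + 1)]
        ring

lemma prefixProb_nthFalse {g : ℕ} (hg : 0 < g) (b : ℕ) :
    prefixProb q (g + b) (fun ω => Gcount ω (g + b) = g ∧ ω (g + b - 1) = false)
      = (g + b - 1).choose b * (1 - q) ^ g * q ^ b := by
  obtain ⟨g, rfl⟩ : ∃ g', g = g' + 1 := ⟨g - 1, by omega⟩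
  have hpred : (fun ω => Gcount ω (g + 1 + b) = g + 1 ∧ ω (g + 1 + b - 1) = false)
      = fun ω => Gcount ω (g + b) = g ∧ shift (g + b) ω 0 = false := by
    funext ω
    rw [show g + 1 + b = g + b + 1 by omega, Nat.add_sub_cancel]
    by_cases h : ω (g + b) = false <;> simp [Gcount_succ, h, shift]
  have hG : DependsOn (fun ω => Gcount ω (g + b) = g) (Set.Iio (g + b)) :=
    fun ω ω' h => congrArg (· = g) (dependsOn_Gcount (g + b) h)
  rw [hpred, show g + 1 + b = g + b + 1 by omega,
    prefixProb_and_shift 1 (fun ω => ω 0 = false) (g + b) hG, prefixProb_Gcount_eq,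
    Nat.add_sub_cancel, Nat.add_sub_cancel_left, Nat.choose_symm_add]
  simp [prefixProb]
  ring

end PrefixProb

section HitProb

variable {q : ℝ}

lemma eq_pow_of_recurrence (hq0 : 0 ≤ q) (hq : q < 1 / 2) {θ : ℕ → ℝ} (h0 : θ 0 = 1)
    (hrec : ∀ d, θ (d + 1) = q * θ d + (1 - q) * θ (d + 2)) (hnonneg : ∀ d, 0 ≤ θ d)
    (hle : ∀ d, θ d ≤ (q / (1 - q)) ^ d) (d : ℕ) : θ d = (q / (1 - q)) ^ d := by
  obtain ⟨ρ, hρ⟩ : ∃ ρ, ρ = q / (1 - q) := ⟨_, rfl⟩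
  rw [← hρ] at hle ⊢
  have hq1 : 1 - q ≠ 0 := by linarith
  have hρq : (1 - q) * ρ = q := by rw [hρ]; field_simp
  have hρ0 : 0 ≤ ρ := by rw [hρ]; exact div_nonneg hq0 (by linarith)
  have hρ1 : ρ < 1 := by rw [hρ, div_lt_one (by linarith)]; linarith
  -- The roots of `(1 - q) x² - x + q` are `1` and `ρ`, so `θ (d + 1) - ρ θ d` is constant.
  have hconst : ∀ d, θ (d + 1) - ρ * θ d = θ 1 - ρ := by
    intro d
    induction d with
    | zero => rw [h0, mul_one]
    | succ d ih =>
      rw [← ih]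
      refine mul_left_cancel₀ hq1 ?_
      linear_combination (-1 : ℝ) * hrec d - (θ (d + 1) - θ d) * hρq
  have hθ : Tendsto θ atTop (𝓝 0) :=
    squeeze_zero hnonneg hle (tendsto_pow_atTop_nhds_zero_of_lt_one hρ0 hρ1)
  have he : θ 1 - ρ = 0 := by
    refine tendsto_nhds_unique (tendsto_const_nhds (f := (atTop : Filter ℕ))) ?_
    simpa [hconst] using (hθ.comp (tendsto_add_atTop_nat 1)).sub (hθ.const_mul ρ)
  induction d with
  | zero => rw [h0, pow_zero]
  | succ d ih => linear_combination hconst d + he + ρ * ih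

variable (q)

/-- `hitProb q k d` is the probability that the walk with steps `+1` (probability `q`) and `-1`
reaches level `d` within `k` steps. -/
noncomputable def hitProb : ℕ → ℕ → ℝ
  | _, 0 => 1
  | 0, _ + 1 => 0
  | k + 1, d + 1 => q * hitProb k d + (1 - q) * hitProb k (d + 2)

@[simp] lemma hitProb_zero_right (k : ℕ) : hitProb q k 0 = 1 := by
  cases k <;> rfl

@[simp] lemma hitProb_zero_succ (d : ℕ) : hitProb q 0 (d + 1) = 0 := rfl

lemma hitProb_succ_succ (k d : ℕ) :
    hitProb q (k + 1) (d + 1) = q * hitProb q k d + (1 - q) * hitProb q k (d + 2) := rfl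

variable {q}

lemma hitProb_nonneg (hq0 : 0 ≤ q) (hq1 : q ≤ 1) (k d : ℕ) : 0 ≤ hitProb q k d := by
  induction k generalizing d with
  | zero => cases d <;> simp
  | succ k ih =>
    cases d with
    | zero => simp
    | succ d => exact add_nonneg (mul_nonneg hq0 (ih _)) (mul_nonneg (sub_nonneg.2 hq1) (ih _))

lemma hitProb_le_succ (hq0 : 0 ≤ q) (hq1 : q ≤ 1) (k d : ℕ) :
    hitProb q k d ≤ hitProb q (k + 1) d := by
  induction k generalizing d with
  | zero =>
    cases d with
    | zero => simp
    | succ d => simpa using hitProb_nonneg hq0 hq1 1 (d + 1)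
  | succ k ih =>
    cases d with
    | zero => simp
    | succ d =>
      rw [hitProb_succ_succ, hitProb_succ_succ]
      exact add_le_add (mul_le_mul_of_nonneg_left (ih d) hq0)
        (mul_le_mul_of_nonneg_left (ih (d + 2)) (sub_nonneg.2 hq1))

lemma hitProb_le_pow (hq0 : 0 ≤ q) (hq1 : q < 1) (k d : ℕ) :
    hitProb q k d ≤ (q / (1 - q)) ^ d := by
  have hρ0 : 0 ≤ q / (1 - q) := div_nonneg hq0 (by linarith)
  induction k generalizing d with
  | zero => cases d <;> simp [hρ0]
  | succ k ih =>
    cases d with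
    | zero => simp
    | succ d =>
      have hq1' : 1 - q ≠ 0 := by linarith
      have hfix : q + (1 - q) * (q / (1 - q)) ^ 2 = q / (1 - q) := by field_simp; ring
      calc hitProb q (k + 1) (d + 1)
          ≤ q * (q / (1 - q)) ^ d + (1 - q) * (q / (1 - q)) ^ (d + 2) := by
            rw [hitProb_succ_succ]
            exact add_le_add (mul_le_mul_of_nonneg_left (ih d) hq0)
              (mul_le_mul_of_nonneg_left (ih (d + 2)) (by linarith))
        _ = (q / (1 - q)) ^ d * (q + (1 - q) * (q / (1 - q)) ^ 2) := by ring
        _ = (q / (1 - q)) ^ (d + 1) := by rw [hfix, pow_succ]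

theorem tendsto_hitProb (hq0 : 0 ≤ q) (hq : q < 1 / 2) (d : ℕ) :
    Tendsto (fun k => hitProb q k d) atTop (𝓝 ((q / (1 - q)) ^ d)) := by
  have hq1 : q ≤ 1 := by linarith
  have hlim : ∀ d, Tendsto (fun k => hitProb q k d) atTop (𝓝 (⨆ k, hitProb q k d)) := fun d =>
    tendsto_atTop_ciSup (monotone_nat_of_le_succ fun k => hitProb_le_succ hq0 hq1 k d)
      ⟨_, Set.forall_mem_range.2 fun k => hitProb_le_pow hq0 (by linarith) k d⟩
  have hrec : ∀ d, ⨆ k, hitProb q k (d + 1)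
      = q * (⨆ k, hitProb q k d) + (1 - q) * ⨆ k, hitProb q k (d + 2) := fun d =>
    tendsto_nhds_unique ((hlim (d + 1)).comp (tendsto_add_atTop_nat 1))
      (((hlim d).const_mul q).add ((hlim (d + 2)).const_mul (1 - q)))
  rw [← eq_pow_of_recurrence hq0 hq (by simp) hrec
    (fun d => ge_of_tendsto' (hlim d) fun k => hitProb_nonneg hq0 hq1 k d)
    (fun d => le_of_tendsto' (hlim d) fun k => hitProb_le_pow hq0 (by linarith) k d) d]
  exact hlim d

lemma prefixProb_hitsWithin (k d : ℕ) :
    prefixProb q k (fun ω => HitsWithin ω k d) = hitProb q k d := by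
  induction k generalizing d with
  | zero => cases d <;> simp [prefixProb, hitsWithin_zero_left]
  | succ k ih =>
    cases d with
    | zero => simp [hitsWithin_zero_right, prefixProb_const]
    | succ d =>
      simp only [prefixProb, hitsWithin_cons_succ_succ, if_true, Bool.false_eq_true, if_false, ih]
      rfl

end HitProb

section Measure

def IsBernoulliProduct (q : ℝ) (μ : Measure (ℕ → Bool)) : Prop :=
  ∀ (s : Finset ℕ) (f : ℕ → Bool),
    μ {ω | ∀ i ∈ s, ω i = f i} = ∏ i ∈ s, if f i then ENNReal.ofReal q else ENNReal.ofReal (1 - q)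

variable {q : ℝ} {μ : Measure (ℕ → Bool)}

lemma setOf_cylinder_inter_eq (a : ℕ) (c : ℕ → Bool) (P : (ℕ → Bool) → Prop) (x : Bool) :
    {ω | (∀ i ∈ range a, ω i = c i) ∧ P (shift a ω)} ∩ {ω | ω a = x}
      = {ω | (∀ i ∈ range (a + 1), ω i = Function.update c a x i)
          ∧ P (cons x (shift (a + 1) ω))} := by
  ext ω
  simp only [Set.mem_inter_iff, Set.mem_ofPred_eq, mem_range, Nat.lt_succ_iff_lt_or_eq, or_imp,
    forall_and, forall_eq, Function.update_self]
  constructor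
  · rintro ⟨⟨hc, hP⟩, rfl⟩
    exact ⟨⟨fun i hi => by rw [Function.update_of_ne hi.ne, hc i hi], rfl⟩, shift_eq_cons a ω ▸ hP⟩
  · rintro ⟨⟨hc, rfl⟩, hP⟩
    exact ⟨⟨fun i hi => by rw [hc i hi, Function.update_of_ne hi.ne], shift_eq_cons a ω ▸ hP⟩, rfl⟩

lemma measure_cylinder_and_shift (hq0 : 0 ≤ q) (hq1 : q ≤ 1) (hμ : IsBernoulliProduct q μ)
    (L : ℕ) {P : (ℕ → Bool) → Prop} (hP : DependsOn P (Set.Iio L)) (a : ℕ) (c : ℕ → Bool) :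
    μ {ω | (∀ i ∈ range a, ω i = c i) ∧ P (shift a ω)}
      = (∏ i ∈ range a, if c i then ENNReal.ofReal q else ENNReal.ofReal (1 - q))
        * ENNReal.ofReal (prefixProb q L P) := by
  induction L generalizing P a c with
  | zero =>
    obtain ⟨p, rfl⟩ : ∃ p, P = fun _ => p :=
      ⟨_, funext fun ω => hP (x := ω) (y := fun _ => false) (by simp)⟩
    by_cases hp : p
    · simpa [hp, prefixProb_const] using hμ (range a) c
    · simp [hp, prefixProb_const]
  | succ L ih =>
    have hprod : ∀ x : Bool, (∏ i ∈ range (a + 1),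
        if Function.update c a x i then ENNReal.ofReal q else ENNReal.ofReal (1 - q))
        = (∏ i ∈ range a, if c i then ENNReal.ofReal q else ENNReal.ofReal (1 - q))
          * if x then ENNReal.ofReal q else ENNReal.ofReal (1 - q) := fun x => by
      rw [prod_range_succ, Function.update_self]
      congr 1
      exact prod_congr rfl fun i hi => by rw [Function.update_of_ne (mem_range.mp hi).ne]
    have hsdiff : {ω | (∀ i ∈ range a, ω i = c i) ∧ P (shift a ω)} \ {ω | ω a = true}
        = {ω | (∀ i ∈ range a, ω i = c i) ∧ P (shift a ω)} ∩ {ω | ω a = false} := by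
      ext ω; simp
    rw [← measure_inter_add_sdiff _ (measurableSet_eq_fun (measurable_pi_apply a) measurable_const),
      hsdiff, setOf_cylinder_inter_eq, setOf_cylinder_inter_eq,
      ih (dependsOn_comp_cons hP true), ih (dependsOn_comp_cons hP false), hprod, hprod,
      prefixProb, ENNReal.ofReal_add (mul_nonneg hq0 (prefixProb_nonneg hq0 hq1 _ _))
        (mul_nonneg (sub_nonneg.2 hq1) (prefixProb_nonneg hq0 hq1 _ _)),
      ENNReal.ofReal_mul hq0, ENNReal.ofReal_mul (sub_nonneg.2 hq1)]
    simp only [if_true, Bool.false_eq_true, if_false]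
    ring

theorem measure_setOf_eq_prefixProb (hq0 : 0 ≤ q) (hq1 : q ≤ 1) (hμ : IsBernoulliProduct q μ)
    (L : ℕ) {P : (ℕ → Bool) → Prop} (hP : DependsOn P (Set.Iio L)) :
    μ {ω | P ω} = ENNReal.ofReal (prefixProb q L P) := by
  simpa using measure_cylinder_and_shift hq0 hq1 hμ L hP 0 fun _ => false

theorem measure_and_exists_lead_shift_eq (hq0 : 0 ≤ q) (hq : q < 1 / 2)
    (hμ : IsBernoulliProduct q μ) {a : ℕ} {A : (ℕ → Bool) → Prop} (hA : DependsOn A (Set.Iio a))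
    (d : ℕ) :
    μ {ω | A ω ∧ ∃ j, lead (shift a ω) j = d}
      = ENNReal.ofReal (prefixProb q a A * (q / (1 - q)) ^ d) := by
  let E : ℕ → Set (ℕ → Bool) := fun k => {ω | A ω ∧ HitsWithin (shift a ω) k d}
  have hE : {ω | A ω ∧ ∃ j, lead (shift a ω) j = d} = ⋃ k, E k := by
    ext ω
    simp only [E, HitsWithin, Set.mem_ofPred_eq, Set.mem_iUnion]
    exact ⟨fun ⟨hA, j, hj⟩ => ⟨j, hA, j, le_rfl, hj⟩, fun ⟨_, hA, j, _, hj⟩ => ⟨hA, j, hj⟩⟩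
  have hmono : Monotone E := fun k k' hk ω ⟨hA, j, hj, hd⟩ => ⟨hA, j, hj.trans hk, hd⟩
  have hmeas : ∀ k, μ (E k) = ENNReal.ofReal (prefixProb q a A * hitProb q k d) := fun k => by
    rw [measure_setOf_eq_prefixProb hq0 (by linarith) hμ (a + k)
      (dependsOn_and_shift hA (dependsOn_hitsWithin k d)),
      prefixProb_and_shift k (fun ω => HitsWithin ω k d) a hA, prefixProb_hitsWithin]
  rw [hE]
  refine tendsto_nhds_unique (tendsto_measure_iUnion_atTop hmono) ?_
  simp only [Function.comp_def, hmeas]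
  exact (ENNReal.continuous_ofReal.tendsto _).comp ((tendsto_hitProb hq0 hq d).const_mul _)

end Measure

end Catchup

open Catchup

theorem prob_phaseI_m_and_catchup_general (q : ℝ) (hq0 : 0 < q) (hq : q < 1 / 2)
    (n : ℕ) (m : ℕ) (hm : m < n)
    (μ : Measure (ℕ → Bool))
    (hμ : ∀ (s : Finset ℕ) (f : ℕ → Bool),
      μ {ω | ∀ i ∈ s, ω i = f i}
        = ∏ i ∈ s, if f i then ENNReal.ofReal q else ENNReal.ofReal (1 - q)) :
    μ {ω | (Gcount ω (n + m) = n ∧ ω (n + m - 1) = false)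
           ∧ ∃ N, n + m ≤ N ∧ Bcount ω N = Gcount ω N}
      = ENNReal.ofReal (((n + m - 1).choose m : ℝ) * (1 - q) ^ m * q ^ n) := by
  have hA : DependsOn (fun ω => Gcount ω (n + m) = n ∧ ω (n + m - 1) = false) (Set.Iio (n + m)) :=
    fun ω ω' h => by
      dsimp only
      rw [show Gcount ω (n + m) = Gcount ω' (n + m) from dependsOn_Gcount (n + m) h,
        h (n + m - 1) (by simp; omega)]
  have hset : {ω | (Gcount ω (n + m) = n ∧ ω (n + m - 1) = false)
        ∧ ∃ N, n + m ≤ N ∧ Bcount ω N = Gcount ω N}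
      = {ω | (Gcount ω (n + m) = n ∧ ω (n + m - 1) = false)
        ∧ ∃ j, lead (shift (n + m) ω) j = (n - m : ℕ)} := by
    ext ω
    exact and_congr_right fun hG =>
      exists_Bcount_eq_Gcount_iff ω (by have := Bcount_add_Gcount ω (n + m); omega)
  rw [hset, measure_and_exists_lead_shift_eq hq0.le hq hμ hA, prefixProb_nthFalse (by omega) m]
  obtain ⟨d, rfl⟩ := Nat.exists_eq_add_of_lt hm
  have hq1 : 1 - q ≠ 0 := by linarith
  have hcancel : (1 - q) ^ (d + 1) * (q / (1 - q)) ^ (d + 1) = q ^ (d + 1) := by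
    rw [← mul_pow, mul_div_cancel₀ _ hq1]
  rw [show m + d + 1 - m = d + 1 by omega]
  congr 1
  linear_combination ((m + d + 1 + m - 1).choose m * (1 - q) ^ m * q ^ m : ℝ) * hcancel

/-- Let `μ` be the product probability measure on `ℕ → Bool` whose coordinates are
independent and equal `true` with probability `q` (cylinder condition `hμ`).  For
`0 < q < 1/2`, `n ≥ 1` and `m < n`, the probability that exactly `m` `true`s occur before
the `n`-th `false` (so the `n`-th `false` is at position `n+m`) AND team B, being `n-m`
behind at the end of Phase I, eventually ties the score (`∃ N ≥ n+m, B_N = G_N`) equals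
`C(n+m-1, m) (1-q)^m q^n`. -/
theorem prob_phaseI_m_and_catchup (q : ℝ) (hq0 : 0 < q) (hq : q < 1 / 2)
    (n : ℕ) (hn : 0 < n) (m : ℕ) (hm : m < n)
    (μ : Measure (ℕ → Bool)) [IsProbabilityMeasure μ]
    (hμ : ∀ (s : Finset ℕ) (f : ℕ → Bool),
      μ {ω | ∀ i ∈ s, ω i = f i}
        = ∏ i ∈ s, if f i then ENNReal.ofReal q else ENNReal.ofReal (1 - q)) :
    μ {ω | (Gcount ω (n + m) = n ∧ ω (n + m - 1) = false)
           ∧ ∃ N, n + m ≤ N ∧ Bcount ω N = Gcount ω N}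
      = ENNReal.ofReal (((n + m - 1).choose m : ℝ) * (1 - q) ^ m * q ^ n) :=
  prob_phaseI_m_and_catchup_general q hq0 hq n m hm μ hμ
end

section
/- For every real q and every integer n ≥ 2, the Rosenfeld polynomials satisfy the second-order linear recurrence R_n(q) = -((4nq² - 4nq - 6q² - n + 6q + 1)/(n-1)) · R_{n-1}(q) + (2q(q-1)(2n-3)/(n-1)) · R_{n-2}(q), with initial conditions R_0(q) = 1 and R_1(q) = 2q. -/
open Finset

/-- The Rosenfeld polynomial `R_n(q)`:
`R_n(q) = 1 - (1-q)^n · Σ_{m=0}^{n-1} C(n+m-1, m) q^m + q^n · Σ_{m=0}^{n-1} C(n+m-1, m) (1-q)^m`. -/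
noncomputable def Rosenfeld (n : ℕ) (q : ℝ) : ℝ :=
  1 - (1 - q) ^ n * ∑ m ∈ range n, ((n + m - 1).choose m : ℝ) * q ^ m
    + q ^ n * ∑ m ∈ range n, ((n + m - 1).choose m : ℝ) * (1 - q) ^ m

/-!
The consecutive differences of the Rosenfeld polynomials are
`R_{n+1}(q) - R_n(q) = (2q - 1) C(2n, n) (q(1-q))^n`: Pascal's rule telescopes the truncated
sums `Σ_{m<n} C(n+m-1, m) x^m` defining `R_n`, leaving only their boundary terms. Since
`(n+1) C(2n+2, n+1) = 2(2n+1) C(2n, n)`, consecutive differences are in the ratio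
`(n+1) (R_{n+2} - R_{n+1}) = 2(2n+1) q(1-q) (R_{n+1} - R_n)`, which is the recurrence rearranged.
-/

lemma Nat.centralBinom_succ_eq_two_mul_choose (n : ℕ) :
    (n + 1).centralBinom = 2 * (n + 1 + n).choose n := by
  rw [Nat.centralBinom_eq_two_mul_choose, two_mul, ← add_assoc, Nat.choose_succ_succ',
    Nat.choose_symm_add, two_mul]

noncomputable def rosenfeldSum (n : ℕ) (x : ℝ) : ℝ :=
  ∑ m ∈ range n, ((n + m - 1).choose m : ℝ) * x ^ m

lemma rosenfeld_eq_rosenfeldSum (n : ℕ) (q : ℝ) :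
    Rosenfeld n q = 1 - (1 - q) ^ n * rosenfeldSum n q + q ^ n * rosenfeldSum n (1 - q) :=
  rfl

lemma rosenfeldSum_succ (n : ℕ) (x : ℝ) :
    rosenfeldSum (n + 1) x = ∑ m ∈ range (n + 1), ((n + m).choose m : ℝ) * x ^ m := by
  simp only [rosenfeldSum, Nat.add_right_comm n 1, Nat.add_sub_cancel]

lemma one_sub_mul_rosenfeldSum_sub (n : ℕ) (x : ℝ) :
    (1 - x) * rosenfeldSum (n + 2) x - rosenfeldSum (n + 1) x
      = ((n + 1 + n).choose n : ℝ) * x ^ (n + 1) * (1 - 2 * x) := by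
  set c : ℕ → ℝ := fun m ↦ ((n + 1 + m).choose m : ℝ) * x ^ m
  set d : ℕ → ℝ := fun m ↦ ((n + 1 + m).choose (m + 1) : ℝ) * x ^ (m + 1)
  have hS₂ : rosenfeldSum (n + 2) x = ∑ m ∈ range (n + 2), c m := rosenfeldSum_succ (n + 1) x
  have hS₁ : rosenfeldSum (n + 1) x = 1 + ∑ m ∈ range n, d m := by
    rw [rosenfeldSum_succ, sum_range_succ', add_comm]
    simp [d, add_assoc, add_comm 1]
  have hpascal (m : ℕ) : c (m + 1) = x * c m + d m := by
    simp only [c, d, ← add_assoc, Nat.choose_succ_succ', Nat.cast_add, pow_succ]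
    ring
  have hc_top : c (n + 1) = 2 * (n + 1 + n).choose n * x ^ (n + 1) := by
    simp only [c, ← two_mul (n + 1), ← Nat.centralBinom_eq_two_mul_choose,
      Nat.centralBinom_succ_eq_two_mul_choose]
    push_cast
    ring
  have hd_top : d n = (n + 1 + n).choose n * x ^ (n + 1) := by
    simp only [d, Nat.choose_symm_add]
  have hsplit : ∑ m ∈ range (n + 2), c m
      = 1 + x * ∑ m ∈ range (n + 1), c m + ∑ m ∈ range (n + 1), d m := by
    rw [sum_range_succ', sum_congr rfl fun m _ ↦ hpascal m, sum_add_distrib, mul_sum]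
    simp only [c, add_zero, Nat.choose_zero_right, Nat.cast_one, pow_zero, mul_one]
    ring
  rw [sum_range_succ c (n + 1), sum_range_succ d, hc_top, hd_top] at hsplit
  rw [hS₂, hS₁, sum_range_succ c (n + 1), hc_top]
  linear_combination hsplit

@[simp] lemma rosenfeld_zero (q : ℝ) : Rosenfeld 0 q = 1 := by
  simp [Rosenfeld]

@[simp] lemma rosenfeld_one (q : ℝ) : Rosenfeld 1 q = 2 * q := by
  simp only [Rosenfeld, pow_one, range_one, add_tsub_cancel_left, Nat.choose_self, Nat.cast_one,
    one_mul, sum_singleton, pow_zero, mul_one, sub_sub_cancel]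
  ring

lemma rosenfeld_succ_sub (n : ℕ) (q : ℝ) :
    Rosenfeld (n + 1) q - Rosenfeld n q = (2 * q - 1) * n.centralBinom * (q * (1 - q)) ^ n := by
  rcases n with _ | n
  · simp
  have hq := one_sub_mul_rosenfeldSum_sub n q
  have hq' := one_sub_mul_rosenfeldSum_sub n (1 - q)
  have hc : ((n + 1).centralBinom : ℝ) = 2 * (n + 1 + n).choose n := by
    exact_mod_cast Nat.centralBinom_succ_eq_two_mul_choose n
  rw [rosenfeld_eq_rosenfeldSum, rosenfeld_eq_rosenfeldSum, hc, mul_pow]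
  rw [sub_sub_cancel] at hq'
  linear_combination (-(1 - q) ^ (n + 1)) * hq + q ^ (n + 1) * hq'

lemma rosenfeld_sub_ratio (n : ℕ) (q : ℝ) :
    (n + 1) * (Rosenfeld (n + 2) q - Rosenfeld (n + 1) q)
      = 2 * (2 * n + 1) * (q * (1 - q)) * (Rosenfeld (n + 1) q - Rosenfeld n q) := by
  have hc : ((n + 1 : ℕ) : ℝ) * (n + 1).centralBinom = 2 * (2 * n + 1) * n.centralBinom := by
    exact_mod_cast Nat.succ_mul_centralBinom_succ n
  push_cast at hc
  rw [rosenfeld_succ_sub, rosenfeld_succ_sub]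
  linear_combination (2 * q - 1) * (q * (1 - q)) ^ (n + 1) * hc

/-- **Theorem 1.** The Rosenfeld polynomials satisfy the second-order linear recurrence
`R_n(q) = -((4nq² - 4nq - 6q² - n + 6q + 1)/(n-1)) R_{n-1}(q)
          + (2q(q-1)(2n-3)/(n-1)) R_{n-2}(q)`
for `n ≥ 2`, with initial conditions `R_0(q) = 1`, `R_1(q) = 2q`. -/
theorem rosenfeld_recurrence (q : ℝ) (n : ℕ) (hn : 2 ≤ n) :
    Rosenfeld n q =
      -((4 * n * q ^ 2 - 4 * n * q - 6 * q ^ 2 - n + 6 * q + 1) / ((n : ℝ) - 1))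
          * Rosenfeld (n - 1) q
        + (2 * q * (q - 1) * (2 * n - 3) / ((n : ℝ) - 1)) * Rosenfeld (n - 2) q
      ∧ Rosenfeld 0 q = 1 ∧ Rosenfeld 1 q = 2 * q := by
  refine ⟨?_, rosenfeld_zero q, rosenfeld_one q⟩
  obtain ⟨k, rfl⟩ : ∃ k, n = k + 2 := ⟨n - 2, by omega⟩
  have hk : ((k + 2 : ℕ) : ℝ) - 1 = k + 1 := by push_cast; ring
  rw [Nat.add_sub_cancel, show k + 2 - 1 = k + 1 by omega, hk]
  field_simp
  push_cast
  linear_combination rosenfeld_sub_ratio k q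
end

section
/- (Grunspan–Pérez-Marco incomplete beta formula) For 0 < q < 1/2 and a positive integer n, the Rosenfeld polynomial equals the regularized incomplete beta function I_s(n, 1/2) at s = 4q(1-q); explicitly, R_n(q) = (Γ(n + 1/2) / (Γ(n) · Γ(1/2))) · ∫_0^{4q(1-q)} t^{n-1} (1-t)^{-1/2} dt. -/
/-!
Write `R_n(q) = 1 - F_n(q) + F_n(1 - q)`, where `F_n(q) = (1-q)^n Σ_{m<n} C(n+m-1, m) q^m`
is a negative binomial distribution function. Differentiating `F_n` term by term gives a
telescoping sum, so `F_n'(q) = -n·C(2n-1, n)·(q(1-q))^(n-1)` and hence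
`R_n(q) = 2n·C(2n-1, n)·∫₀^q (y(1-y))^(n-1) dy`. On the other side, the substitution
`t = 4y(1-y)` has `(1-t)^(-1/2) dt = 4 dy` for `y < 1/2`, which turns the incomplete beta
integral into `4^n ∫₀^q (y(1-y))^(n-1) dy`; the constants agree by
`Γ(n + 1/2) = (2n-1)‼ √π / 2^n`.
-/

open Finset

/-- The probability of fewer than `n` failures before the `n`-th success, failures having
probability `q`. -/
noncomputable def negBinomialCDF (n : ℕ) (q : ℝ) : ℝ :=
  (1 - q) ^ n * ∑ m ∈ range n, ((n + m - 1).choose m : ℝ) * q ^ m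

theorem rosenfeld_eq_negBinomialCDF (n : ℕ) (q : ℝ) :
    Rosenfeld n q = 1 - negBinomialCDF n q + negBinomialCDF n (1 - q) := by
  simp only [Rosenfeld, negBinomialCDF, sub_sub_cancel]

/-- The derivative is `(1 - x)^N * (f m - f (m + 1))` with `f k = k * C(N + k, k) * x^(k - 1)`,
so that summing over `m` telescopes. -/
theorem hasDerivAt_choose_mul_pow_mul_one_sub_pow (N m : ℕ) (x : ℝ) :
    HasDerivAt (fun y : ℝ => ((N + m).choose m : ℝ) * y ^ m * (1 - y) ^ (N + 1))
      ((1 - x) ^ N * (m * (N + m).choose m * x ^ (m - 1)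
        - (m + 1 : ℕ) * (N + (m + 1)).choose (m + 1) * x ^ (m + 1 - 1))) x := by
  have hchoose : ((m + 1 : ℕ) : ℝ) * (N + (m + 1)).choose (m + 1)
      = (N + m + 1 : ℕ) * (N + m).choose m := by
    rw [mul_comm]; exact_mod_cast (Nat.add_one_mul_choose_eq (N + m) m).symm
  refine (((hasDerivAt_pow m x).const_mul ((N + m).choose m : ℝ)).fun_mul
    (((hasDerivAt_id x).const_sub 1).fun_pow (N + 1))).congr_deriv ?_
  rcases m with _ | k
  · simp only [id_eq, add_zero, Nat.add_sub_cancel] at hchoose ⊢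
    push_cast at hchoose ⊢
    linear_combination (1 - x) ^ N * hchoose
  · simp only [id_eq, Nat.add_sub_cancel] at hchoose ⊢
    push_cast at hchoose ⊢
    linear_combination ((1 - x) ^ N * x ^ (k + 1)) * hchoose

theorem hasDerivAt_negBinomialCDF_succ (N : ℕ) (x : ℝ) :
    HasDerivAt (negBinomialCDF (N + 1))
      (-((N + 1 : ℕ) * (2 * N + 1).choose (N + 1) * (x * (1 - x)) ^ N)) x := by
  have hsum : negBinomialCDF (N + 1)
      = fun y => ∑ m ∈ range (N + 1), ((N + m).choose m : ℝ) * y ^ m * (1 - y) ^ (N + 1) := by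
    funext y
    simp only [negBinomialCDF, Finset.mul_sum, Nat.add_right_comm N 1, Nat.add_sub_cancel]
    exact Finset.sum_congr rfl fun m _ => by ring
  rw [hsum]
  refine (HasDerivAt.fun_sum fun m _ =>
    hasDerivAt_choose_mul_pow_mul_one_sub_pow N m x).congr_deriv ?_
  rw [← Finset.mul_sum,
    Finset.sum_range_sub' (fun k : ℕ => (k : ℝ) * (N + k).choose k * x ^ (k - 1)),
    show N + (N + 1) = 2 * N + 1 by ring]
  simp only [Nat.cast_zero, zero_mul, zero_sub, Nat.add_sub_cancel, mul_pow]
  ring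

theorem hasDerivAt_rosenfeld_succ (N : ℕ) (x : ℝ) :
    HasDerivAt (Rosenfeld (N + 1))
      (2 * (N + 1 : ℕ) * (2 * N + 1).choose (N + 1) * (x * (1 - x)) ^ N) x := by
  have hB := hasDerivAt_negBinomialCDF_succ N
  rw [show Rosenfeld (N + 1)
      = fun y => 1 - negBinomialCDF (N + 1) y + negBinomialCDF (N + 1) (1 - y)
    from funext (rosenfeld_eq_negBinomialCDF (N + 1))]
  refine (((hasDerivAt_const x 1).sub (hB x)).add
    ((hB (1 - x)).comp x ((hasDerivAt_id x).const_sub 1))).congr_deriv ?_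
  rw [sub_sub_cancel, mul_comm (1 - x) x]
  ring

theorem rosenfeld_succ_eq_integral (N : ℕ) (q : ℝ) :
    Rosenfeld (N + 1) q
      = 2 * (N + 1 : ℕ) * (2 * N + 1).choose (N + 1) *
          ∫ y in (0 : ℝ)..q, (y * (1 - y)) ^ N := by
  have hzero : Rosenfeld (N + 1) 0 = 0 := by simp [Rosenfeld, Finset.sum_range_succ']
  rw [← intervalIntegral.integral_const_mul,
    intervalIntegral.integral_eq_sub_of_hasDerivAt (fun x _ => hasDerivAt_rosenfeld_succ N x)
      ((by fun_prop : Continuous _).intervalIntegrable _ _), hzero, sub_zero]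

theorem integral_pow_mul_one_sub_rpow_neg_half (N : ℕ) {q : ℝ} (hq : q < 1 / 2) :
    ∫ t in (0 : ℝ)..(4 * q * (1 - q)), t ^ N * (1 - t) ^ (-(1 / 2) : ℝ)
      = 4 ^ (N + 1) * ∫ y in (0 : ℝ)..q, (y * (1 - y)) ^ N := by
  have hlt : ∀ y ∈ Set.uIcc 0 q, y < 1 / 2 := fun y hy =>
    hy.2.trans_lt (max_lt (by norm_num) hq)
  have hderiv : ∀ y : ℝ, HasDerivAt (fun y => 4 * y * (1 - y)) (4 - 8 * y) y := fun y =>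
    (((hasDerivAt_id y).const_mul 4).fun_mul ((hasDerivAt_id y).const_sub 1)).congr_deriv
      (by simp only [id_eq]; ring)
  have hsubst := intervalIntegral.integral_comp_mul_deriv_of_deriv_nonneg
    (g := fun t => t ^ N * (1 - t) ^ (-(1 / 2) : ℝ)) (a := 0) (b := q)
    (by fun_prop) (fun y _ => hderiv y)
    (fun y hy => by linarith [hlt y (Set.Ioo_subset_Icc_self hy)])
  rw [mul_zero, zero_mul] at hsubst
  rw [← hsubst, ← intervalIntegral.integral_const_mul]
  refine intervalIntegral.integral_congr fun y hy => ?_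
  have hy' : 0 < 1 - 2 * y := by linarith [hlt y hy]
  have hroot : (1 - 4 * y * (1 - y)) ^ (-(1 / 2) : ℝ) = (1 - 2 * y)⁻¹ := by
    rw [show 1 - 4 * y * (1 - y) = (1 - 2 * y) ^ 2 by ring, Real.rpow_neg (sq_nonneg _),
      ← Real.sqrt_eq_rpow, Real.sqrt_sq hy'.le]
  simp only [Function.comp_apply, hroot]
  rw [show (4 : ℝ) - 8 * y = (1 - 2 * y) * 4 by ring, mul_assoc, inv_mul_cancel_left₀ hy'.ne',
    mul_assoc, mul_pow]
  ring

open Nat in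
theorem gamma_ratio_mul_four_pow (N : ℕ) :
    Real.Gamma (((N + 1 : ℕ) : ℝ) + 1 / 2)
        / (Real.Gamma ((N + 1 : ℕ) : ℝ) * Real.Gamma (1 / 2)) * 4 ^ (N + 1)
      = 2 * (N + 1 : ℕ) * (2 * N + 1).choose (N + 1) := by
  have hchoose : (2 * N + 1).choose (N + 1) * (N + 1) * N ! = (2 * N + 1)‼ * 2 ^ N := by
    have h := choose_mul_factorial_mul_factorial (show N + 1 ≤ 2 * N + 1 by omega)
    rw [show 2 * N + 1 - (N + 1) = N by omega, factorial_eq_mul_doubleFactorial (2 * N),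
      doubleFactorial_two_mul, factorial_succ, ← mul_assoc, ← mul_assoc] at h
    exact Nat.eq_of_mul_eq_mul_right (factorial_pos N) (by linarith)
  have hfour : (4 : ℝ) ^ (N + 1) = 2 ^ (N + 1) * 2 ^ (N + 1) := by rw [← mul_pow]; norm_num
  push_cast
  rw [Real.Gamma_nat_add_one_add_half, Real.Gamma_nat_eq_factorial, Real.Gamma_one_half_eq, hfour]
  have hpi : √Real.pi ≠ 0 := by positivity
  field_simp
  linear_combination (-2 : ℝ) * (by exact_mod_cast hchoose :
    ((2 * N + 1).choose (N + 1) : ℝ) * (N + 1) * N ! = (2 * N + 1)‼ * 2 ^ N)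

theorem rosenfeld_eq_incompleteBeta_general (q : ℝ) (hq : q < 1 / 2)
    (n : ℕ) (hn : 0 < n) :
    Rosenfeld n q =
      Real.Gamma ((n : ℝ) + 1 / 2) / (Real.Gamma (n : ℝ) * Real.Gamma (1 / 2)) *
        ∫ t in (0 : ℝ)..(4 * q * (1 - q)), t ^ (n - 1) * (1 - t) ^ (-(1 / 2) : ℝ) := by
  obtain ⟨N, rfl⟩ := Nat.exists_eq_add_one_of_ne_zero hn.ne'
  rw [Nat.add_sub_cancel, integral_pow_mul_one_sub_rpow_neg_half N hq, ← mul_assoc,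
    gamma_ratio_mul_four_pow, rosenfeld_succ_eq_integral]

/-- **Grunspan–Pérez-Marco incomplete beta formula.**  For `0 < q < 1/2` and `n ≥ 1`,
`R_n(q) = I_s(n, 1/2)` with `s = 4q(1-q)`, i.e.
`R_n(q) = (Γ(n+1/2)/(Γ(n)·Γ(1/2))) · ∫_0^{4q(1-q)} t^{n-1} (1-t)^{-1/2} dt`. -/
theorem rosenfeld_eq_incompleteBeta (q : ℝ) (hq0 : 0 < q) (hq : q < 1 / 2)
    (n : ℕ) (hn : 0 < n) :
    Rosenfeld n q =
      Real.Gamma ((n : ℝ) + 1 / 2) / (Real.Gamma (n : ℝ) * Real.Gamma (1 / 2)) *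
        ∫ t in (0 : ℝ)..(4 * q * (1 - q)), t ^ (n - 1) * (1 - t) ^ (-(1 / 2) : ℝ) :=
  rosenfeld_eq_incompleteBeta_general q hq n hn
end

section
/- (Leading-order asymptotics of the Rosenfeld polynomials) For fixed 0 < q < 1/2, R_n(q) is asymptotic to (4q(1-q))^n / (√π · (1-2q) · √n) as n → ∞; that is, lim_{n→∞} R_n(q) · √π · (1-2q) · √n / (4q(1-q))^n = 1. -/
/-!
With `p = 1 - q`, both negative-binomial sums in `R_{N+1}(q)` are binomial tails (split a word
of length `2N+1` at the position where one letter occurs for the `(N+1)`-st time), and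
`R_{N+1}(q) = 2 ∑_{k > N} C(2N+1,k) q^k p^(2N+1-k)`. Factoring out the term `k = N+1`, the
remaining terms are `C(2N+1,N+1+l)/C(2N+1,N+1) (q/p)^l`; each binomial ratio tends to `1` and is
at most `1`, so by dominated convergence their sum tends to `∑ (q/p)^l = p/(1-2q)`. Finally
`2 C(2N+1,N+1) = C(2N+2,N+1) ∼ 4^(N+1)/√(π(N+1))` by Stirling's formula.
-/

open Finset Filter

open Topology Real

section Binomial

variable {R : Type*} [CommSemiring R]

theorem sum_antidiagonal_succ_choose_succ (x y : R) (n c b : ℕ) :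
    ∑ p ∈ antidiagonal (b + 1), ((n + 1).choose p.1 : R) * x ^ p.1 * y ^ (c + p.2)
      = x * ∑ p ∈ antidiagonal b, (n.choose p.1 : R) * x ^ p.1 * y ^ (c + p.2)
        + ∑ p ∈ antidiagonal (b + 1), (n.choose p.1 : R) * x ^ p.1 * y ^ (c + p.2) := by
  simp only [Nat.sum_antidiagonal_succ, Nat.choose_succ_succ', Nat.choose_zero_right, Nat.cast_add,
    add_mul, sum_add_distrib, mul_sum]
  ring_nf

/-- Both sides sum over the words with `b` letters `x` or fewer among `a + b + 1` letters: on the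
right they are split according to the position of the `(a + 1)`-st letter `y`. -/
theorem sum_antidiagonal_choose_mul_pow_mul_pow (x y : R) (a b : ℕ) :
    ∑ p ∈ antidiagonal b, ((a + b + 1).choose p.1 : R) * x ^ p.1 * y ^ (a + 1 + p.2)
      = ∑ p ∈ antidiagonal b, ((a + p.1).choose p.1 : R) * x ^ p.1 * y ^ (a + 1) * (x + y) ^ p.2 := by
  induction b with
  | zero => simp
  | succ b ih =>
    have hL : ∑ p ∈ antidiagonal b, ((a + b + 1).choose p.1 : R) * x ^ p.1 * y ^ (a + 1 + (p.2 + 1))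
        = y * ∑ p ∈ antidiagonal b, ((a + b + 1).choose p.1 : R) * x ^ p.1 * y ^ (a + 1 + p.2) := by
      rw [mul_sum]; exact sum_congr rfl fun _ _ => by ring
    have hR : ∑ p ∈ antidiagonal b,
          ((a + p.1).choose p.1 : R) * x ^ p.1 * y ^ (a + 1) * (x + y) ^ (p.2 + 1)
        = (x + y) * ∑ p ∈ antidiagonal b,
          ((a + b + 1).choose p.1 : R) * x ^ p.1 * y ^ (a + 1 + p.2) := by
      rw [ih, mul_sum]; exact sum_congr rfl fun _ _ => by ring
    rw [show a + (b + 1) + 1 = a + b + 1 + 1 by ring, sum_antidiagonal_succ_choose_succ,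
      Nat.sum_antidiagonal_succ', Nat.sum_antidiagonal_succ', hL, hR, ← add_assoc a b 1]
    set L := ∑ p ∈ antidiagonal b, ((a + b + 1).choose p.1 : R) * x ^ p.1 * y ^ (a + 1 + p.2)
    simp only [add_zero, pow_zero, mul_one]
    ring

/-- `∑_{k > N} C(2N+1,k) x^k y^(2N+1-k)`, indexed by `k = N + 1 + l`. -/
def binomUpperHalf (N : ℕ) (x y : R) : R :=
  ∑ l ∈ range (N + 1), ((2 * N + 1).choose (N + 1 + l) : R) * x ^ (N + 1 + l) * y ^ (N - l)

theorem binomUpperHalf_eq_sum_antidiagonal (N : ℕ) (x y : R) :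
    binomUpperHalf N x y
      = ∑ p ∈ antidiagonal N, ((2 * N + 1).choose p.1 : R) * y ^ p.1 * x ^ (N + 1 + p.2) := by
  rw [← Nat.sum_antidiagonal_swap, Nat.sum_antidiagonal_eq_sum_range_succ_mk, binomUpperHalf]
  refine sum_congr rfl fun l hl => ?_
  have hl : l ≤ N := Nat.lt_succ_iff.mp (mem_range.mp hl)
  rw [Prod.swap_prod_mk, Nat.choose_symm_of_eq_add (by omega : 2 * N + 1 = N + 1 + l + (N - l))]
  ring

theorem add_pow_two_mul_add_one (N : ℕ) (x y : R) :
    (x + y) ^ (2 * N + 1) = binomUpperHalf N x y + binomUpperHalf N y x := by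
  rw [add_pow, show 2 * N + 1 + 1 = (N + 1) + (N + 1) by ring, sum_range_add, add_comm,
    binomUpperHalf_eq_sum_antidiagonal N y x, Nat.sum_antidiagonal_eq_sum_range_succ_mk,
    binomUpperHalf]
  congr 1 <;> refine sum_congr rfl fun k hk => ?_
  · rw [show 2 * N + 1 - (N + 1 + k) = N - k by omega]
    ring
  · have hk : k ≤ N := Nat.lt_succ_iff.mp (mem_range.mp hk)
    rw [show 2 * N + 1 - k = N + 1 + (N - k) by omega]
    ring

theorem pow_mul_sum_choose_mul_pow_eq_binomUpperHalf {x y : R} (hxy : x + y = 1) (N : ℕ) :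
    x ^ (N + 1) * ∑ m ∈ range (N + 1), ((N + m).choose m : R) * y ^ m = binomUpperHalf N x y := by
  rw [binomUpperHalf_eq_sum_antidiagonal, two_mul, sum_antidiagonal_choose_mul_pow_mul_pow,
    add_comm y x, hxy, Nat.sum_antidiagonal_eq_sum_range_succ_mk, mul_sum]
  simp only [one_pow, mul_one]
  exact sum_congr rfl fun _ _ => by ring

end Binomial

theorem binomUpperHalf_eq_mul_sum {K : Type*} [Field K] [CharZero K] (N : ℕ) (x : K) {y : K}
    (hy : y ≠ 0) :
    binomUpperHalf N x y = (2 * N + 1).choose (N + 1) * x ^ (N + 1) * y ^ N *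
      ∑ l ∈ range (N + 1),
        ((2 * N + 1).choose (N + 1 + l) : K) / (2 * N + 1).choose (N + 1) * (x / y) ^ l := by
  have hC : ((2 * N + 1).choose (N + 1) : K) ≠ 0 :=
    Nat.cast_ne_zero.mpr (Nat.choose_pos (by omega)).ne'
  rw [binomUpperHalf, mul_sum]
  refine sum_congr rfl fun l hl => ?_
  have hl : l ≤ N := Nat.lt_succ_iff.mp (mem_range.mp hl)
  rw [div_pow, show y ^ N = y ^ (N - l) * y ^ l by rw [← pow_add, Nat.sub_add_cancel hl]]
  field_simp
  ring

theorem rosenfeld_succ (N : ℕ) (q : ℝ) : Rosenfeld (N + 1) q = 2 * binomUpperHalf N q (1 - q) := by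
  have hidx : ∀ m, N + 1 + m - 1 = N + m := fun m => by omega
  have hbinom := add_pow_two_mul_add_one N q (1 - q)
  rw [add_sub_cancel, one_pow] at hbinom
  simp only [Rosenfeld, hidx]
  rw [pow_mul_sum_choose_mul_pow_eq_binomUpperHalf (sub_add_cancel 1 q),
    pow_mul_sum_choose_mul_pow_eq_binomUpperHalf (add_sub_cancel q 1)]
  linear_combination hbinom

namespace Nat

theorem choose_two_mul_add_one_succ_pos (N : ℕ) : 0 < (2 * N + 1).choose (N + 1) :=
  choose_pos (by omega)

theorem choose_le_choose_two_mul_add_one_succ (N k : ℕ) :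
    (2 * N + 1).choose k ≤ (2 * N + 1).choose (N + 1) := by
  simpa [choose_symm_half, show (2 * N + 1) / 2 = N by omega] using choose_le_middle k (2 * N + 1)

theorem choose_two_mul_add_one_add_succ_mul (N l : ℕ) :
    (2 * N + 1).choose (N + 1 + (l + 1)) * (N + 1 + l + 1)
      = (2 * N + 1).choose (N + 1 + l) * (N - l) := by
  rw [← add_assoc, choose_succ_right_eq, show 2 * N + 1 - (N + 1 + l) = N - l by omega]

theorem centralBinom_succ_eq_two_mul_choose_s8 (N : ℕ) :
    (N + 1).centralBinom = 2 * (2 * N + 1).choose (N + 1) := by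
  rw [centralBinom_eq_two_mul_choose, show 2 * (N + 1) = 2 * N + 1 + 1 by ring,
    choose_succ_succ', choose_symm_half, ← two_mul]

end Nat

theorem tendsto_choose_add_div_choose (l : ℕ) :
    Tendsto (fun N : ℕ => ((2 * N + 1).choose (N + 1 + l) : ℝ) / (2 * N + 1).choose (N + 1))
      atTop (𝓝 1) := by
  induction l with
  | zero =>
    refine tendsto_const_nhds.congr fun N => (div_self ?_).symm
    exact_mod_cast (Nat.choose_two_mul_add_one_succ_pos N).ne'
  | succ l ih =>
    rw [← tendsto_add_atTop_iff_nat l]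
    have h := (ih.comp (tendsto_add_atTop_nat l)).mul
      (tendsto_natCast_div_add_atTop (2 * l + 2 : ℝ))
    rw [mul_one] at h
    refine h.congr fun N => ?_
    have key : ((2 * (N + l) + 1).choose (N + l + 1 + l + 1) : ℝ) * (N + (2 * l + 2))
        = (2 * (N + l) + 1).choose (N + l + 1 + l) * N := by
      have := Nat.choose_two_mul_add_one_add_succ_mul (N + l) l
      rw [Nat.add_sub_cancel, ← add_assoc] at this
      exact_mod_cast (by rw [← this]; ring)
    have hC : ((2 * (N + l) + 1).choose (N + l + 1) : ℝ) ≠ 0 := by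
      exact_mod_cast (Nat.choose_two_mul_add_one_succ_pos (N + l)).ne'
    have hN : (N : ℝ) + (2 * l + 2) ≠ 0 := by positivity
    simp only [Function.comp_apply]
    field_simp
    linear_combination -key

theorem tendsto_sum_choose_add_div_choose_mul_pow {r : ℝ} (hr0 : 0 ≤ r) (hr1 : r < 1) :
    Tendsto (fun N : ℕ => ∑ l ∈ range (N + 1),
        ((2 * N + 1).choose (N + 1 + l) : ℝ) / (2 * N + 1).choose (N + 1) * r ^ l)
      atTop (𝓝 (1 - r)⁻¹) := by
  have hbound (N l : ℕ) :
      ‖((2 * N + 1).choose (N + 1 + l) : ℝ) / (2 * N + 1).choose (N + 1) * r ^ l‖ ≤ r ^ l := by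
    rw [norm_of_nonneg (by positivity)]
    refine mul_le_of_le_one_left (by positivity) ((div_le_one ?_).mpr ?_)
    · exact_mod_cast Nat.choose_two_mul_add_one_succ_pos N
    · exact_mod_cast Nat.choose_le_choose_two_mul_add_one_succ N _
  have h := tendsto_tsum_of_dominated_convergence (summable_geometric_of_lt_one hr0 hr1)
    (fun l => (tendsto_choose_add_div_choose l).mul_const (r ^ l)) (.of_forall hbound)
  simp only [one_mul, tsum_geometric_of_lt_one hr0 hr1] at h
  refine h.congr fun N => tsum_eq_sum fun l hl => ?_
  rw [Nat.choose_eq_zero_of_lt (by simp at hl; omega)]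
  simp

theorem centralBinom_mul_sqrt_div_four_pow {n : ℕ} (hn : n ≠ 0) :
    (n.centralBinom : ℝ) * √n / 4 ^ n
      = Stirling.stirlingSeq (2 * n) / Stirling.stirlingSeq n ^ 2 := by
  have hfac : ((2 * n).factorial : ℝ) = n.centralBinom * n.factorial * n.factorial := by
    rw [Nat.centralBinom_eq_two_mul_choose,
      ← Nat.choose_mul_factorial_mul_factorial (by omega : n ≤ 2 * n), show 2 * n - n = n by omega]
    push_cast
    ring
  have hsqrt : √(2 * ((2 * n : ℕ) : ℝ)) = 2 * √n := by
    rw [show 2 * ((2 * n : ℕ) : ℝ) = 2 ^ 2 * n by push_cast; ring, sqrt_mul' _ (Nat.cast_nonneg n),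
      sqrt_sq zero_le_two]
  simp only [Stirling.stirlingSeq, hfac, hsqrt, div_pow, mul_pow,
    sq_sqrt (by positivity : (0 : ℝ) ≤ 2 * n)]
  push_cast
  field_simp
  rw [sq_sqrt (Nat.cast_nonneg n), show (4 : ℝ) ^ n = 2 ^ (2 * n) by rw [pow_mul]; norm_num]
  ring

theorem tendsto_centralBinom_mul_sqrt_div_four_pow :
    Tendsto (fun n : ℕ => (n.centralBinom : ℝ) * √n / 4 ^ n) atTop (𝓝 (√π)⁻¹) := by
  have h := (Stirling.tendsto_stirlingSeq_sqrt_pi.comp (tendsto_id.const_mul_atTop' two_pos)).div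
    (Stirling.tendsto_stirlingSeq_sqrt_pi.pow 2) (by positivity)
  rw [sq, div_mul_cancel_right₀ (by positivity)] at h
  exact h.congr' ((eventually_ne_atTop 0).mono fun n hn => (centralBinom_mul_sqrt_div_four_pow hn).symm)

/-- **Leading-order asymptotics (Grunspan–Pérez-Marco).**  For fixed `0 < q < 1/2`,
`R_n(q) ∼ (4q(1-q))^n / (√π (1-2q) √n)` as `n → ∞`. -/
theorem rosenfeld_asymptotics (q : ℝ) (hq0 : 0 < q) (hq : q < 1 / 2) :
    Tendsto
      (fun n : ℕ =>
        Rosenfeld n q * Real.sqrt Real.pi * (1 - 2 * q) * Real.sqrt n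
          / (4 * q * (1 - q)) ^ n)
      atTop (nhds 1) := by
  have hp : 0 < 1 - q := by linarith
  have h2q : 1 - 2 * q ≠ 0 := by linarith
  have hlim := ((tendsto_centralBinom_mul_sqrt_div_four_pow.comp (tendsto_add_atTop_nat 1)).mul_const
    (√π * (1 - 2 * q) / (1 - q))).mul (tendsto_sum_choose_add_div_choose_mul_pow
      (div_nonneg hq0.le hp.le) ((div_lt_one hp).mpr (by linarith)))
  rw [show 1 - q / (1 - q) = (1 - 2 * q) / (1 - q) by field_simp; ring,
    show (√π)⁻¹ * (√π * (1 - 2 * q) / (1 - q)) * ((1 - 2 * q) / (1 - q))⁻¹ = 1 by field_simp] at hlim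
  rw [← tendsto_add_atTop_iff_nat 1]
  refine hlim.congr fun N => ?_
  rw [Function.comp_apply, rosenfeld_succ, binomUpperHalf_eq_mul_sum N q hp.ne',
    Nat.centralBinom_succ_eq_two_mul_choose_s8]
  set S := ∑ l ∈ range (N + 1),
    ((2 * N + 1).choose (N + 1 + l) : ℝ) / (2 * N + 1).choose (N + 1) * (q / (1 - q)) ^ l
  push_cast
  simp only [mul_pow]
  field_simp
  ring
end

section
/- For every real q with q ≠ 1/2 and every integer n ≥ 3, the quantities A_n(q) satisfy the second-order linear recurrence A_n(q) = -((4nq² - 4nq - 6q² - n + 6q)/(n-1)) · A_{n-1}(q) + (2q(q-1)(2n-3)/(n-2)) · A_{n-2}(q), with initial conditions A_1(q) = q/(1-2q) and A_2(q) = 2q²(2-q)/(1-2q). -/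
/-!
Write `A_{j+1} = q^{j+1}/(1-2q) · Σ_{m ≤ j} a_j(m)`. Zeilberger's algorithm produces a certificate
`G_j(m) = C(j+m, m) (1-q)^m q m P_j(m)`, with `P_j` a quadratic polynomial in `m`, such that the
recurrence combination of `a_{j+2}(m)`, `a_{j+1}(m)`, `a_j(m)` equals `G_j(m+1) - G_j(m)`; once every
binomial is expressed through `C(j+m, m)` this is a polynomial identity. Summing over `m < j + 3`
telescopes to `G_j(j+3)`. On that range the two shorter sums pick up the vanishing summands
`a_{j+1}(j+2)` and `a_j(j+1)`, and also `a_j(j+2)`, which `G_j(j+3)` cancels exactly.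
-/

open Finset

/-- `A_n(q) = (q^n/(1-2q)) · Σ_{m=0}^{n-1} C(n+m-1, m) (1-q)^m (n-m)`. -/
noncomputable def Avalue (n : ℕ) (q : ℝ) : ℝ :=
  q ^ n / (1 - 2 * q) *
    ∑ m ∈ range n, ((n + m - 1).choose m : ℝ) * (1 - q) ^ m * ((n : ℝ) - (m : ℝ))

lemma cast_choose_add_one_left_mul (j m : ℕ) :
    ((j + 1 + m).choose m : ℝ) * (j + 1) = (j + m + 1) * (j + m).choose m := by
  have h := Nat.choose_mul_succ_eq (j + m) m
  rw [show j + m + 1 - m = j + 1 by omega, show j + m + 1 = j + 1 + m by omega] at h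
  rw [add_right_comm (j : ℝ), mul_comm _ ((j + m).choose m : ℝ)]
  exact_mod_cast h.symm

lemma cast_choose_add_one_mul (j m : ℕ) :
    ((j + (m + 1)).choose (m + 1) : ℝ) * (m + 1) = (j + m + 1) * (j + m).choose m := by
  rw [← add_assoc]
  exact_mod_cast (Nat.add_one_mul_choose_eq (j + m) m).symm

/-- The summand of `A_n` for `n = j + 1`, so that `n + m - 1` needs no truncated subtraction. -/
noncomputable def Asummand (q : ℝ) (j m : ℕ) : ℝ :=
  ((j + m).choose m : ℝ) * (1 - q) ^ m * ((j : ℝ) + 1 - m)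

lemma Avalue_succ (q : ℝ) (j : ℕ) :
    Avalue (j + 1) q = q ^ (j + 1) / (1 - 2 * q) * ∑ m ∈ range (j + 1), Asummand q j m := by
  unfold Avalue Asummand
  congr 1
  refine sum_congr rfl fun m _ => ?_
  rw [show j + 1 + m - 1 = j + m by omega]
  push_cast
  ring

noncomputable def Acert (q : ℝ) (j m : ℕ) : ℝ :=
  ((j + m).choose m : ℝ) * (1 - q) ^ m * q * m *
    ((j + 2) * (3 * j + 7) - 2 * q * (j + 3) * (2 * j + 3)
      + ((4 * q - 4) * (j + 3) + 3 - 6 * q) * m + (m : ℝ) ^ 2)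

lemma Acert_zero (q : ℝ) (j : ℕ) : Acert q j 0 = 0 := by
  simp [Acert]

lemma Asummand_recurrence_telescopes (q : ℝ) (j m : ℕ) :
    ((j : ℝ) + 2) * (j + 1) * q ^ 2 * Asummand q (j + 2) m
      + (j + 1) * (4 * (j + 3) * q ^ 2 - 4 * (j + 3) * q - 6 * q ^ 2 - (j + 3) + 6 * q) * q *
          Asummand q (j + 1) m
      - (j + 2) * (2 * q * (q - 1) * (2 * j + 3)) * Asummand q j m
      = Acert q j (m + 1) - Acert q j m := by
  have h1 := cast_choose_add_one_left_mul j m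
  have h2 := cast_choose_add_one_left_mul (j + 1) m
  have h3 := cast_choose_add_one_mul j m
  unfold Asummand Acert
  push_cast at h2 ⊢
  linear_combination
    ((j : ℝ) + 1) * q ^ 2 * (1 - q) ^ m * (j + 3 - m) * h2
      + q * (1 - q) ^ m * (q * (j + 3 - m) * (j + m + 2)
          + (4 * (j + 3) * q ^ 2 - 4 * (j + 3) * q - 6 * q ^ 2 - (j + 3) + 6 * q) * (j + 2 - m)) * h1
      - (1 - q) ^ (m + 1) * q * ((j + 2) * (3 * j + 7) - 2 * q * (j + 3) * (2 * j + 3)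
          + ((4 * q - 4) * (j + 3) + 3 - 6 * q) * (m + 1) + ((m : ℝ) + 1) ^ 2) * h3

lemma Asummand_self_add_one (q : ℝ) (j : ℕ) : Asummand q j (j + 1) = 0 := by
  simp [Asummand]

lemma Acert_boundary (q : ℝ) (j : ℕ) :
    Acert q j (j + 3) = -((j + 2) * (2 * q * (q - 1) * (2 * j + 3))) * Asummand q j (j + 2) := by
  have h := cast_choose_add_one_mul j (j + 2)
  unfold Acert Asummand
  push_cast at h ⊢
  linear_combination (1 - q) ^ (j + 3) * q * ((j + 2) * (3 * j + 7) - 2 * q * (j + 3) * (2 * j + 3)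
          + ((4 * q - 4) * (j + 3) + 3 - 6 * q) * (j + 3) + ((j : ℝ) + 3) ^ 2) * h

lemma sum_Asummand_recurrence (q : ℝ) (j : ℕ) :
    ((j : ℝ) + 2) * (j + 1) * q ^ 2 * ∑ m ∈ range (j + 3), Asummand q (j + 2) m
      + (j + 1) * (4 * (j + 3) * q ^ 2 - 4 * (j + 3) * q - 6 * q ^ 2 - (j + 3) + 6 * q) * q *
          ∑ m ∈ range (j + 2), Asummand q (j + 1) m
      - (j + 2) * (2 * q * (q - 1) * (2 * j + 3)) * ∑ m ∈ range (j + 1), Asummand q j m = 0 := by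
  have telescoped := sum_range_sub (Acert q j) (j + 3)
  simp only [← Asummand_recurrence_telescopes, sum_add_distrib, sum_sub_distrib, ← mul_sum,
    Acert_zero, sub_zero] at telescoped
  simp only [sum_range_succ (Asummand q (j + 1)) (j + 2), sum_range_succ (Asummand q j) (j + 2),
    sum_range_succ (Asummand q j) (j + 1), Asummand_self_add_one, Acert_boundary] at telescoped
  linear_combination telescoped

lemma Avalue_recurrence_mul_denominators (q : ℝ) (j : ℕ) :
    ((j : ℝ) + 2) * (j + 1) * Avalue (j + 3) q
      + (j + 1) * (4 * (j + 3) * q ^ 2 - 4 * (j + 3) * q - 6 * q ^ 2 - (j + 3) + 6 * q) *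
          Avalue (j + 2) q
      - (j + 2) * (2 * q * (q - 1) * (2 * j + 3)) * Avalue (j + 1) q = 0 := by
  rw [Avalue_succ q (j + 2), Avalue_succ q (j + 1), Avalue_succ q j]
  linear_combination q ^ (j + 1) / (1 - 2 * q) * sum_Asummand_recurrence q j

theorem Avalue_recurrence_general (q : ℝ) (n : ℕ) (hn : 3 ≤ n) :
    Avalue n q =
      -((4 * n * q ^ 2 - 4 * n * q - 6 * q ^ 2 - n + 6 * q) / ((n : ℝ) - 1))
          * Avalue (n - 1) q
        + (2 * q * (q - 1) * (2 * n - 3) / ((n : ℝ) - 2)) * Avalue (n - 2) q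
      ∧ Avalue 1 q = q / (1 - 2 * q)
      ∧ Avalue 2 q = 2 * q ^ 2 * (2 - q) / (1 - 2 * q) := by
  refine ⟨?_, by simp [Avalue], ?_⟩
  · obtain ⟨j, rfl⟩ := Nat.exists_eq_add_of_le' hn
    have hj1 : (j : ℝ) + 1 ≠ 0 := by positivity
    have hj2 : (j : ℝ) + 2 ≠ 0 := by positivity
    rw [show j + 3 - 1 = j + 2 by omega, show j + 3 - 2 = j + 1 by omega]
    push_cast
    rw [show (j : ℝ) + 3 - 1 = j + 2 by ring, show (j : ℝ) + 3 - 2 = j + 1 by ring]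
    field_simp
    linear_combination Avalue_recurrence_mul_denominators q j
  · rw [Avalue, sum_range_succ, sum_range_one]
    norm_num
    ring

/-- **Theorem 4.** `A_n(q)` satisfies the second-order linear recurrence
`A_n(q) = -((4nq² - 4nq - 6q² - n + 6q)/(n-1)) A_{n-1}(q) + (2q(q-1)(2n-3)/(n-2)) A_{n-2}(q)`
for `n ≥ 3`, with initial conditions `A_1(q) = q/(1-2q)`, `A_2(q) = 2q²(2-q)/(1-2q)`. -/
theorem Avalue_recurrence (q : ℝ) (hq : q ≠ 1 / 2) (n : ℕ) (hn : 3 ≤ n) :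
    Avalue n q =
      -((4 * n * q ^ 2 - 4 * n * q - 6 * q ^ 2 - n + 6 * q) / ((n : ℝ) - 1))
          * Avalue (n - 1) q
        + (2 * q * (q - 1) * (2 * n - 3) / ((n : ℝ) - 2)) * Avalue (n - 2) q
      ∧ Avalue 1 q = q / (1 - 2 * q)
      ∧ Avalue 2 q = 2 * q ^ 2 * (2 - q) / (1 - 2 * q) :=
  Avalue_recurrence_general q n hn
end

section
/- (Limit of the conditional expected duration) For fixed 0 < q < 1/2, the ratio E_n(q) = A_n(q)/R_n(q) tends to (1-q)/(1-2q)² as n → ∞. -/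
/-
Write `p = 1 - q` and `S_N(x) = ∑_{m ≤ N} C(N+m, m) x^m`. The negative-binomial identity
`p^(N+1) S_N(q) + q^(N+1) S_N(p) = 1` (both players of a best-of-`(2N+1)` series are accounted
for) turns `R_(N+1)(q)` into `2 q^(N+1) S_N(p)`, so `q^(N+1)` cancels from `A/R`. Reversing the
order of summation (`k = N - m`) and dividing by the largest term `C(2N, N) p^N` leaves the series
`∑_k w_N(k) p^(-k)` and `∑_k w_N(k) p^(-k) (k+1)`, where `w_N(k) = C(2N-k, N-k) / C(2N, N)` is the
falling-factorial ratio `N^(k) / (2N)^(k)`. These weights are at most `2^(-k)` and tend to `2^(-k)`,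
so, as `r = 1/(2p) < 1`, dominated convergence gives the limits `1/(1-r)` and `1/(1-r)^2`, whose
quotient, divided by `2(1-2q)`, is `(1-q)/(1-2q)^2`.
-/

open Finset Filter Topology

noncomputable def negBinomSum (N : ℕ) (x : ℝ) : ℝ :=
  ∑ m ∈ range (N + 1), ((N + m).choose m : ℝ) * x ^ m

theorem one_sub_mul_negBinomSum_succ (N : ℕ) (x : ℝ) :
    (1 - x) * negBinomSum (N + 1) x = negBinomSum N x
      + ((2 * N + 1).choose (N + 1) : ℝ) * x ^ (N + 1)
      - ((2 * N + 2).choose (N + 1) : ℝ) * x ^ (N + 2) := by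
  set S := ∑ m ∈ range (N + 1), ((N + 1 + m).choose m : ℝ) * x ^ m
  have truncate : S = negBinomSum (N + 1) x - ((2 * N + 2).choose (N + 1) : ℝ) * x ^ (N + 1) := by
    rw [negBinomSum, sum_range_succ _ (N + 1), show N + 1 + (N + 1) = 2 * N + 2 by ring]
    ring
  have pascal (m : ℕ) : ((N + 1 + (m + 1)).choose (m + 1) : ℝ) * x ^ (m + 1) =
      ((N + (m + 1)).choose (m + 1) : ℝ) * x ^ (m + 1)
        + x * (((N + 1 + m).choose m : ℝ) * x ^ m) := by
    rw [show N + 1 + (m + 1) = N + 1 + m + 1 by ring, Nat.choose_succ_succ',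
      Nat.add_right_comm N 1 m, Nat.add_assoc N m 1]
    push_cast
    ring
  have split : negBinomSum (N + 1) x =
      ∑ m ∈ range (N + 2), ((N + m).choose m : ℝ) * x ^ m + x * S := by
    rw [negBinomSum, sum_range_succ', sum_congr rfl fun m _ => pascal m, sum_add_distrib, mul_sum,
      sum_range_succ' _ (N + 1)]
    simp only [Nat.choose_zero_right, Nat.cast_one, pow_zero, mul_one]
    ring
  have extend : ∑ m ∈ range (N + 2), ((N + m).choose m : ℝ) * x ^ m =
      negBinomSum N x + ((2 * N + 1).choose (N + 1) : ℝ) * x ^ (N + 1) := by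
    rw [negBinomSum, sum_range_succ _ (N + 1), two_mul, add_assoc]
  linear_combination split + x * truncate + extend

theorem choose_two_mul_add_two (N : ℕ) :
    (2 * N + 2).choose (N + 1) = 2 * (2 * N + 1).choose (N + 1) := by
  rw [Nat.choose_succ_succ', ← Nat.choose_symm_half]
  ring

theorem pow_mul_negBinomSum_add_pow_mul_negBinomSum {p q : ℝ} (hpq : p + q = 1) (N : ℕ) :
    p ^ (N + 1) * negBinomSum N q + q ^ (N + 1) * negBinomSum N p = 1 := by
  induction N with
  | zero => simp [negBinomSum, hpq]
  | succ N ih =>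
    have hp : 1 - q = p := by linarith
    have hq : 1 - p = q := by linarith
    have rq := one_sub_mul_negBinomSum_succ N q
    have rp := one_sub_mul_negBinomSum_succ N p
    rw [hp] at rq
    rw [hq] at rp
    have hc : ((2 * N + 2).choose (N + 1) : ℝ) = 2 * ((2 * N + 1).choose (N + 1) : ℝ) := by
      exact_mod_cast choose_two_mul_add_two N
    linear_combination p ^ (N + 1) * rq + q ^ (N + 1) * rp + ih
      - (p * q) ^ (N + 1) * (p + q) * hc
      - 2 * ((2 * N + 1).choose (N + 1) : ℝ) * (p * q) ^ (N + 1) * hpq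

theorem sum_range_succ_choose_eq_negBinomSum (N : ℕ) (x : ℝ) :
    ∑ m ∈ range (N + 1), ((N + 1 + m - 1).choose m : ℝ) * x ^ m = negBinomSum N x := by
  simp only [Nat.add_right_comm N 1, Nat.add_sub_cancel, negBinomSum]

theorem Rosenfeld_succ (N : ℕ) (q : ℝ) :
    Rosenfeld (N + 1) q = 2 * q ^ (N + 1) * negBinomSum N (1 - q) := by
  rw [Rosenfeld, sum_range_succ_choose_eq_negBinomSum, sum_range_succ_choose_eq_negBinomSum]
  linear_combination -pow_mul_negBinomSum_add_pow_mul_negBinomSum (sub_add_cancel 1 q) N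

noncomputable def descRatio (N k : ℕ) : ℝ := (N.descFactorial k : ℝ) / ((2 * N).descFactorial k)

theorem descRatio_eq_prod (N k : ℕ) :
    descRatio N k = ∏ i ∈ range k, ((N - i : ℕ) : ℝ) / ((2 * N - i : ℕ) : ℝ) := by
  rw [descRatio, Nat.descFactorial_eq_prod_range, Nat.descFactorial_eq_prod_range, prod_div_distrib]
  push_cast
  rfl

theorem descRatio_eq_zero_of_lt {N k : ℕ} (h : N < k) : descRatio N k = 0 := by
  rw [descRatio, Nat.descFactorial_eq_zero_iff_lt.mpr h, Nat.cast_zero, zero_div]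

theorem descRatio_nonneg (N k : ℕ) : 0 ≤ descRatio N k :=
  div_nonneg (Nat.cast_nonneg _) (Nat.cast_nonneg _)

theorem descRatio_le_half_pow (N k : ℕ) : descRatio N k ≤ (1 / 2) ^ k := by
  rw [descRatio_eq_prod, pow_eq_prod_const]
  refine prod_le_prod (fun i _ => by positivity) fun i _ => ?_
  rcases Nat.eq_zero_or_pos (2 * N - i) with hzero | hpos
  · simp [hzero]
  · rw [div_le_iff₀ (by exact_mod_cast hpos)]
    have hle : (2 * (N - i : ℕ) : ℝ) ≤ (2 * N - i : ℕ) := by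
      exact_mod_cast (by omega : 2 * (N - i) ≤ 2 * N - i)
    linarith

theorem tendsto_sub_div_two_mul_sub (i : ℕ) :
    Tendsto (fun N : ℕ => ((N - i : ℕ) : ℝ) / ((2 * N - i : ℕ) : ℝ)) atTop (𝓝 (1 / 2)) := by
  have h : Tendsto (fun N : ℕ => (1 - i / (N : ℝ)) / (2 - i / (N : ℝ))) atTop
      (𝓝 ((1 - 0) / (2 - 0))) :=
    ((tendsto_const_div_atTop_nhds_zero_nat _).const_sub _).div
      ((tendsto_const_div_atTop_nhds_zero_nat _).const_sub _) (by norm_num)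
  rw [show ((1 : ℝ) - 0) / (2 - 0) = 1 / 2 by norm_num] at h
  refine h.congr' ?_
  filter_upwards [eventually_gt_atTop i] with N hN
  have hN0 : (N : ℝ) ≠ 0 := Nat.cast_ne_zero.mpr (by omega)
  rw [Nat.cast_sub hN.le, Nat.cast_sub (by omega), Nat.cast_mul, Nat.cast_two]
  field_simp

theorem tendsto_descRatio (k : ℕ) :
    Tendsto (fun N => descRatio N k) atTop (𝓝 ((1 / 2) ^ k)) := by
  simpa [descRatio_eq_prod] using
    tendsto_finsetProd (range k) fun i _ => tendsto_sub_div_two_mul_sub i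

theorem choose_sub_mul_descFactorial {N k : ℕ} (h : k ≤ N) :
    (2 * N - k).choose (N - k) * (2 * N).descFactorial k =
      (2 * N).choose N * N.descFactorial k := by
  rw [Nat.descFactorial_eq_factorial_mul_choose, Nat.descFactorial_eq_factorial_mul_choose,
    mul_left_comm ((2 * N).choose N), Nat.choose_mul h]
  ring

theorem sum_choose_mul_pow_eq_tsum_descRatio {p : ℝ} (hp : p ≠ 0) (N : ℕ) (f : ℕ → ℝ) :
    ∑ m ∈ range (N + 1), ((N + m).choose m : ℝ) * p ^ m * f (N - m) =
      (2 * N).choose N * p ^ N * ∑' k, descRatio N k * (p⁻¹ ^ k * f k) := by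
  rw [tsum_eq_sum (s := range (N + 1)) fun k hk => by
      rw [descRatio_eq_zero_of_lt (by simpa using hk), zero_mul],
    mul_sum, ← sum_range_reflect]
  refine sum_congr rfl fun k hk => ?_
  have hkN : k ≤ N := Nat.lt_succ_iff.mp (mem_range.mp hk)
  have hchoose : ((2 * N - k).choose (N - k) : ℝ) * (2 * N).descFactorial k =
      (2 * N).choose N * N.descFactorial k := by
    exact_mod_cast choose_sub_mul_descFactorial hkN
  have hdesc : ((2 * N).descFactorial k : ℝ) ≠ 0 :=
    Nat.cast_ne_zero.mpr (Nat.descFactorial_pos.mpr (by omega)).ne'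
  rw [Nat.add_sub_cancel, Nat.sub_sub_self hkN, show N + (N - k) = 2 * N - k by omega,
    pow_sub₀ p hp hkN, descRatio, inv_pow]
  field_simp
  linear_combination f k * hchoose

theorem negBinomSum_eq_tsum_descRatio {p : ℝ} (hp : p ≠ 0) (N : ℕ) :
    negBinomSum N p = (2 * N).choose N * p ^ N * ∑' k, descRatio N k * p⁻¹ ^ k := by
  simpa [negBinomSum] using sum_choose_mul_pow_eq_tsum_descRatio hp N fun _ => 1

theorem tendsto_tsum_descRatio_mul {f : ℕ → ℝ} (hf : Summable fun k => (1 / 2 : ℝ) ^ k * ‖f k‖) :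
    Tendsto (fun N => ∑' k, descRatio N k * f k) atTop (𝓝 (∑' k, (1 / 2) ^ k * f k)) := by
  refine tendsto_tsum_of_dominated_convergence hf (fun k => (tendsto_descRatio k).mul_const _)
    (Eventually.of_forall fun N k => ?_)
  rw [norm_mul, Real.norm_of_nonneg (descRatio_nonneg N k)]
  exact mul_le_mul_of_nonneg_right (descRatio_le_half_pow N k) (norm_nonneg _)

theorem half_pow_mul_pow (x : ℝ) (k : ℕ) : (1 / 2 : ℝ) ^ k * x ^ k = (x / 2) ^ k := by
  rw [← mul_pow, one_div_mul_eq_div]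

theorem tendsto_tsum_descRatio_mul_pow {x : ℝ} (hx0 : 0 ≤ x) (hx2 : x < 2) :
    Tendsto (fun N => ∑' k, descRatio N k * x ^ k) atTop (𝓝 (1 - x / 2)⁻¹) := by
  have hx : 0 ≤ x / 2 := by positivity
  have hx' : x / 2 < 1 := by linarith
  convert tendsto_tsum_descRatio_mul (f := fun k => x ^ k) ?_ using 2
  · simp_rw [half_pow_mul_pow, tsum_geometric_of_lt_one hx hx']
  · refine (summable_geometric_of_lt_one hx hx').congr fun k => ?_
    rw [norm_pow, Real.norm_of_nonneg hx0, half_pow_mul_pow]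

theorem tendsto_tsum_descRatio_mul_pow_mul_succ {x : ℝ} (hx0 : 0 ≤ x) (hx2 : x < 2) :
    Tendsto (fun N => ∑' k, descRatio N k * (x ^ k * (k + 1))) atTop (𝓝 (1 / (1 - x / 2) ^ 2)) := by
  have hx : ‖x / 2‖ < 1 := by
    rw [Real.norm_of_nonneg (by positivity)]
    linarith
  have h := tsum_choose_mul_geometric_of_norm_lt_one 1 hx
  have hs := summable_choose_mul_geometric_of_norm_lt_one 1 hx
  simp only [Nat.choose_one_right, Nat.cast_add, Nat.cast_one] at h hs
  convert tendsto_tsum_descRatio_mul (f := fun k => x ^ k * (k + 1)) ?_ using 2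
  · simp_rw [← mul_assoc, half_pow_mul_pow, mul_comm _ ((_ : ℝ) + 1), h]
  · refine hs.congr fun k => ?_
    rw [norm_mul, norm_pow, Real.norm_of_nonneg hx0, Real.norm_of_nonneg (by positivity),
      ← mul_assoc, half_pow_mul_pow, mul_comm]

theorem Avalue_succ_s12 {q : ℝ} (hq : 1 - q ≠ 0) (N : ℕ) :
    Avalue (N + 1) q = q ^ (N + 1) / (1 - 2 * q) *
      ((2 * N).choose N * (1 - q) ^ N * ∑' k, descRatio N k * ((1 - q)⁻¹ ^ k * (k + 1))) := by
  rw [Avalue, ← sum_choose_mul_pow_eq_tsum_descRatio hq N fun k => (k : ℝ) + 1]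
  congr 1
  refine sum_congr rfl fun m hm => ?_
  have hmN : m ≤ N := Nat.lt_succ_iff.mp (mem_range.mp hm)
  rw [Nat.add_right_comm N 1 m, Nat.add_sub_cancel, Nat.cast_sub hmN]
  push_cast
  ring

theorem Avalue_div_Rosenfeld_succ {q : ℝ} (hq0 : q ≠ 0) (hq1 : 1 - q ≠ 0) (N : ℕ) :
    Avalue (N + 1) q / Rosenfeld (N + 1) q =
      (∑' k, descRatio N k * ((1 - q)⁻¹ ^ k * (k + 1))) /
        (2 * (1 - 2 * q) * ∑' k, descRatio N k * (1 - q)⁻¹ ^ k) := by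
  have hcentral : ((2 * N).choose N : ℝ) ≠ 0 := Nat.cast_ne_zero.mpr (Nat.centralBinom_ne_zero N)
  rw [Avalue_succ_s12 hq1, Rosenfeld_succ, negBinomSum_eq_tsum_descRatio hq1]
  field_simp

/-- **Theorem 5 (leading order).**  For fixed `0 < q < 1/2`, the conditional expected
duration `E_n(q) = A_n(q)/R_n(q)` tends to `(1-q)/(1-2q)²` as `n → ∞`. -/
theorem expected_duration_limit (q : ℝ) (hq0 : 0 < q) (hq : q < 1 / 2) :
    Tendsto (fun n : ℕ => Avalue n q / Rosenfeld n q) atTop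
      (nhds ((1 - q) / (1 - 2 * q) ^ 2)) := by
  have hp : 0 < 1 - q := by linarith
  have hq2 : 0 < 1 - 2 * q := by linarith
  have hx0 : 0 ≤ (1 - q)⁻¹ := by positivity
  have hx2 : (1 - q)⁻¹ < 2 := by rw [inv_lt_comm₀ hp two_pos]; linarith
  have hgap : 1 - (1 - q)⁻¹ / 2 = (1 - 2 * q) / (2 * (1 - q)) := by field_simp; ring
  have hlim := (tendsto_tsum_descRatio_mul_pow_mul_succ hx0 hx2).div
    ((tendsto_tsum_descRatio_mul_pow hx0 hx2).const_mul (2 * (1 - 2 * q)))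
    (by rw [hgap]; positivity)
  have hval : 1 / (1 - (1 - q)⁻¹ / 2) ^ 2 / (2 * (1 - 2 * q) * (1 - (1 - q)⁻¹ / 2)⁻¹) =
      (1 - q) / (1 - 2 * q) ^ 2 := by
    rw [hgap]
    field_simp
  rw [hval] at hlim
  rw [← tendsto_add_atTop_iff_nat 1]
  simp_rw [Avalue_div_Rosenfeld_succ hq0.ne' hp.ne']
  exact hlim
end
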